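/- arXiv:2006.16629 — 4 statements merged into one kernel-verified Lean document; each statement's English description precedes it below -/
import Mathlib

section
/- Let A > 0, J = [A, A+1], and let φ : J → ℝ be a C^∞ function. Let d ≥ 1 and k ≥ 0 be integers. Suppose that the d-th derivative φ^{(d)} has at most k zeros in J and that M_d φ(α) ≥ λ > 0 for all α ∈ J, where M_d φ(α) := max_{1 ≤ i ≤ d} |φ^{(i)}(α)|. If d = 1, suppose in addition that φ' is monotone on J. Then there exists a constant C_{d,k} > 0 depending only on d and k such that |∫_J e(φ(α)) dα| ≤ C_{d,k} λ^{−1/d}. -/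
/-!
On an interval where one derivative satisfies `|φ⁽ⁱ⁾| ≥ λ`, the classical van der Corput lemma
gives `|∫ e(φ)| ≤ 4^i λ^(-1/i)`. For `i = 1` integrate by parts against `1 / (2πiφ')`, whose total
variation is `O(1/λ)` because `φ''` has constant sign. For `i > 1`, the set where
`|φ⁽ⁱ⁻¹⁾| < λδ` is an interval of length at most `2δ` (as `|φ⁽ⁱ⁾| ≥ λ`), the two remaining pieces
are handled by induction with `λδ` in place of `λ`, and `δ = λ^(-1/i)` balances the bounds.

To reduce the theorem to this, cut `J` at the zeros of `φ''` and at the points where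
`|φ⁽ⁱ⁾| = λ` for some `1 ≤ i < d`. Iterating Rolle's theorem from the at most `k` zeros of
`φ⁽ᵈ⁾`, there are at most `(2d + 1)(k + d)` cuts. Between two consecutive cuts no `|φ⁽ⁱ⁾|`
with `i < d` crosses `λ`, so a single `i ≤ d` has `|φ⁽ⁱ⁾| ≥ λ` on the whole piece, and `φ''`
keeps its sign there. Since the pieces have length at most `1`, each contributes at most
`min(1, 4^i λ^(-1/i)) ≤ 4^d λ^(-1/d)`.
-/

open MeasureTheory Filter Finset

noncomputable def e (t : ℝ) : ℂ := Complex.exp (2 * Real.pi * Complex.I * t)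

open Set intervalIntegral

lemma norm_e (t : ℝ) : ‖e t‖ = 1 := by
  simp [e, Complex.norm_exp]

lemma continuous_e : Continuous e := by
  unfold e
  fun_prop

lemma HasDerivAt.e_comp {φ : ℝ → ℝ} {ψ x : ℝ} (h : HasDerivAt φ ψ x) :
    HasDerivAt (fun y => e (φ y)) (e (φ x) * (2 * Real.pi * Complex.I * ψ)) x := by
  simpa [e] using (h.ofReal_comp.const_mul (2 * Real.pi * Complex.I)).cexp

lemma norm_integral_le_sub_of_norm_le_one {h : ℝ → ℂ} {a b : ℝ} (hab : a ≤ b)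
    (hh : ∀ x, ‖h x‖ ≤ 1) : ‖∫ x in a..b, h x‖ ≤ b - a := by
  simpa [abs_of_nonneg (sub_nonneg.2 hab)] using
    norm_integral_le_of_norm_le_const (a := a) (b := b) (C := 1) fun x _ => hh x

lemma IsPreconnected.forall_lt_or_forall_gt_of_forall_ne {X α : Type*} [TopologicalSpace X]
    [LinearOrder α] [TopologicalSpace α] [OrderClosedTopology α] {s : Set X}
    (hs : IsPreconnected s) {g : X → α} (hg : ContinuousOn g s) {c : α}
    (hne : ∀ x ∈ s, g x ≠ c) : (∀ x ∈ s, g x < c) ∨ (∀ x ∈ s, c < g x) := by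
  by_contra! h
  obtain ⟨⟨x, hx, hcx⟩, ⟨y, hy, hyc⟩⟩ := h
  obtain ⟨z, hz, hzc⟩ := hs.intermediate_value hy hx hg ⟨hyc, hcx⟩
  exact hne z hz hzc

lemma forall_nonneg_or_forall_nonpos_of_forall_ne_zero {g : ℝ → ℝ} {a b : ℝ}
    (hg : ContinuousOn g (Ioo a b)) (hne : ∀ x ∈ Ioo a b, g x ≠ 0) :
    (∀ x ∈ Ioo a b, 0 ≤ g x) ∨ (∀ x ∈ Ioo a b, g x ≤ 0) := by
  rcases isPreconnected_Ioo.forall_lt_or_forall_gt_of_forall_ne hg hne with h | h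
  · exact Or.inr fun x hx => (h x hx).le
  · exact Or.inl fun x hx => (h x hx).le

lemma forall_nonneg_or_forall_nonpos_of_monotoneOn_or_antitoneOn {g g' : ℝ → ℝ} {a b : ℝ}
    (hg' : ∀ x ∈ Ioo a b, HasDerivAt g (g' x) x)
    (hmono : MonotoneOn g (Icc a b) ∨ AntitoneOn g (Icc a b)) :
    (∀ x ∈ Ioo a b, 0 ≤ g' x) ∨ (∀ x ∈ Ioo a b, g' x ≤ 0) := by
  have hacc : ∀ x ∈ Ioo a b, AccPt x (𝓟 (Icc a b)) := fun x hx =>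
    (uniqueDiffOn_Icc (hx.1.trans hx.2) x (Ioo_subset_Icc_self hx)).accPt
  exact hmono.imp
    (fun hm x hx => (hg' x hx).hasDerivWithinAt.nonneg_of_monotoneOn (hacc x hx) hm)
    (fun hm x hx => (hg' x hx).hasDerivWithinAt.nonpos_of_antitoneOn (hacc x hx) hm)

/-- Rolle's theorem, counted: between two consecutive points of a level set of `g` lies a zero
of `g'`. -/
theorem encard_level_le_encard_zeros_add_one {g g' : ℝ → ℝ} {a b : ℝ}
    (hg : ContinuousOn g (Icc a b)) (hg' : ∀ x ∈ Ioo a b, HasDerivAt g (g' x) x) (c : ℝ) :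
    {x ∈ Icc a b | g x = c}.encard ≤ {x ∈ Icc a b | g' x = 0}.encard + 1 := by
  refine ENat.forall_natCast_le_iff_le.mp fun n hn => ?_
  obtain ⟨t, hts, htn⟩ := exists_subset_encard_eq hn
  have ht : t.Finite := finite_of_encard_eq_coe htn
  obtain _ | m := n
  · simp
  have hcard : ht.toFinset.card = m + 1 := by
    have := ht.encard_eq_coe_toFinset_card
    rw [htn] at this
    exact_mod_cast this.symm
  set σ := ht.toFinset.orderEmbOfFin hcard
  have hσ : ∀ j, σ j ∈ {x ∈ Icc a b | g x = c} := fun j =>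
    hts (ht.mem_toFinset.1 (ht.toFinset.orderEmbOfFin_mem hcard j))
  have hrolle : ∀ j : Fin m, ∃ y ∈ Ioo (σ j.castSucc) (σ j.succ), g' y = 0 := fun j =>
    exists_hasDerivAt_eq_zero (σ.strictMono (Fin.castSucc_lt_succ (i := j)))
      (hg.mono (Icc_subset_Icc (hσ _).1.1 (hσ _).1.2)) ((hσ _).2.trans (hσ _).2.symm)
      fun x hx => hg' x ⟨(hσ _).1.1.trans_lt hx.1, hx.2.trans_le (hσ _).1.2⟩
  choose y hy hy0 using hrolle
  have hy_mono : StrictMono y := fun i j hij =>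
    calc y i < σ i.succ := (hy i).2
      _ ≤ σ j.castSucc := σ.monotone (Fin.succ_le_castSucc_iff.2 hij)
      _ < y j := (hy j).1
  have hm : (m : ℕ∞) ≤ {x ∈ Icc a b | g' x = 0}.encard := by
    calc (m : ℕ∞) = ENat.card (Fin m) := by simp
      _ ≤ (range y).encard := hy_mono.injective.encard_range
      _ ≤ _ := encard_le_encard <| range_subset_iff.2 fun j =>
          show y j ∈ {x ∈ Icc a b | g' x = 0} from
            ⟨⟨(hσ _).1.1.trans (hy j).1.le, (hy j).2.le.trans (hσ _).1.2⟩, hy0 j⟩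
  push_cast
  gcongr

/-- `f i` plays the role of the `i`-th derivative of `f 0` on `[a, b]`. -/
structure HasDerivSeqOn (f : ℕ → ℝ → ℝ) (a b : ℝ) : Prop where
  continuousOn : ∀ i, ContinuousOn (f i) (Icc a b)
  hasDerivAt : ∀ i, ∀ x ∈ Ioo a b, HasDerivAt (f i) (f (i + 1) x) x

namespace HasDerivSeqOn

variable {f : ℕ → ℝ → ℝ} {a b : ℝ}

lemma mono (hf : HasDerivSeqOn f a b) {p q : ℝ} (hap : a ≤ p) (hqb : q ≤ b) :
    HasDerivSeqOn f p q where
  continuousOn i := (hf.continuousOn i).mono (Icc_subset_Icc hap hqb)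
  hasDerivAt i x hx := hf.hasDerivAt i x (Ioo_subset_Ioo hap hqb hx)

theorem encard_level_le (hf : HasDerivSeqOn f a b) {k : ℕ∞} (i j : ℕ)
    (hz : {x ∈ Icc a b | f (i + j + 1) x = 0}.encard ≤ k) (c : ℝ) :
    {x ∈ Icc a b | f i x = c}.encard ≤ k + (j + 1) := by
  induction j generalizing i c with
  | zero =>
    grw [encard_level_le_encard_zeros_add_one (hf.continuousOn i) (hf.hasDerivAt i) c, hz]
    simp
  | succ j ih =>
    grw [encard_level_le_encard_zeros_add_one (hf.continuousOn i) (hf.hasDerivAt i) c,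
      ih (i + 1) (by rwa [show i + 1 + j + 1 = i + (j + 1) + 1 by omega]) 0]
    push_cast
    rw [add_assoc]

end HasDerivSeqOn

open scoped ContDiff in
theorem ContDiffOn.hasDerivSeqOn_iteratedDerivWithin {φ : ℝ → ℝ} {a b : ℝ} (hab : a < b)
    (hφ : ContDiffOn ℝ ∞ φ (Icc a b)) :
    HasDerivSeqOn (fun i => iteratedDerivWithin i φ (Icc a b)) a b where
  continuousOn i :=
    hφ.continuousOn_iteratedDerivWithin (by exact_mod_cast le_top) (uniqueDiffOn_Icc hab)
  hasDerivAt i x hx := by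
    have hdiff := hφ.differentiableOn_iteratedDerivWithin (m := i)
      (WithTop.coe_lt_coe.2 (ENat.natCast_lt_top i)) (uniqueDiffOn_Icc hab)
    rw [iteratedDerivWithin_succ]
    exact (hdiff x (Ioo_subset_Icc_self hx)).hasDerivWithinAt.hasDerivAt (Icc_mem_nhds hx.1 hx.2)

theorem integral_abs_eq_abs_sub_of_hasDerivAt {G r : ℝ → ℝ} {a b : ℝ} (hab : a ≤ b)
    (hG : ContinuousOn G (Icc a b)) (hr : ContinuousOn r (Icc a b))
    (hG' : ∀ x ∈ Ioo a b, HasDerivAt G (r x) x)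
    (hsign : (∀ x ∈ Ioo a b, 0 ≤ r x) ∨ (∀ x ∈ Ioo a b, r x ≤ 0)) :
    ∫ x in a..b, |r x| = |G b - G a| := by
  have hint : IntervalIntegrable (fun x => |r x|) volume a b :=
    hr.abs.intervalIntegrable_of_Icc hab
  have hnonneg : 0 ≤ ∫ x in a..b, |r x| := integral_nonneg hab fun _ _ => abs_nonneg _
  rcases hsign with h | h
  · have hftc := integral_eq_sub_of_hasDeriv_right_of_le hab hG
      (fun x hx => by simpa only [abs_of_nonneg (h x hx)] using (hG' x hx).hasDerivWithinAt) hint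
    rw [hftc] at hnonneg ⊢
    exact (abs_of_nonneg hnonneg).symm
  · have hftc := integral_eq_sub_of_hasDeriv_right_of_le hab hG.neg
      (fun x hx => by simpa only [abs_of_nonpos (h x hx)] using (hG' x hx).neg.hasDerivWithinAt)
      hint
    simp only [Pi.neg_apply] at hftc
    rw [hftc] at hnonneg ⊢
    rw [abs_of_nonpos (by linarith)]
    ring

/-- Integration by parts against `G = -1 / (2πφ')`, using `e(φ)' = 2πiφ' e(φ)`. -/
theorem norm_integral_e_le_of_mul_deriv_eq {φ ψ G r : ℝ → ℝ} {a b : ℝ} (hab : a ≤ b)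
    (hφ : ContinuousOn φ (Icc a b)) (hG : ContinuousOn G (Icc a b))
    (hr : ContinuousOn r (Icc a b)) (hφ' : ∀ x ∈ Ioo a b, HasDerivAt φ (ψ x) x)
    (hG' : ∀ x ∈ Ioo a b, HasDerivAt G (r x) x)
    (hψG : ∀ x ∈ Ioo a b, 2 * Real.pi * ψ x * G x = -1) :
    ‖∫ x in a..b, e (φ x)‖ ≤ |G b| + |G a| + ∫ x in a..b, |r x| := by
  set F : ℝ → ℂ := fun x => e (φ x) * (Complex.I * G x)
  have hF' : ∀ x ∈ Ioo a b, HasDerivAt F (e (φ x) + e (φ x) * (Complex.I * r x)) x :=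
    fun x hx => by
      refine ((hφ' x hx).e_comp.mul
        ((hG' x hx).ofReal_comp.const_mul Complex.I)).congr_deriv ?_
      have hψGC : 2 * Real.pi * (ψ x : ℂ) * G x = -1 := by exact_mod_cast hψG x hx
      linear_combination e (φ x) * Complex.I ^ 2 * hψGC - e (φ x) * Complex.I_sq
  have he : ContinuousOn (fun x => e (φ x)) (Icc a b) := continuous_e.comp_continuousOn hφ
  have hF : ContinuousOn F (Icc a b) :=
    he.mul (continuousOn_const.mul (Complex.continuous_ofReal.comp_continuousOn hG))
  have hIr : ContinuousOn (fun x => Complex.I * r x) (Icc a b) :=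
    continuousOn_const.mul (Complex.continuous_ofReal.comp_continuousOn hr)
  have hint : IntervalIntegrable (fun x => e (φ x)) volume a b := he.intervalIntegrable_of_Icc hab
  have hint' : IntervalIntegrable (fun x => e (φ x) * (Complex.I * r x)) volume a b :=
    (he.mul hIr).intervalIntegrable_of_Icc hab
  have hparts : ∫ x in a..b, e (φ x) = F b - F a - ∫ x in a..b, e (φ x) * (Complex.I * r x) := by
    rw [← integral_eq_sub_of_hasDeriv_right_of_le hab hF (fun x hx => (hF' x hx).hasDerivWithinAt)
      (hint.add hint'), integral_add hint hint']
    ring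
  have hrem : ‖∫ x in a..b, e (φ x) * (Complex.I * r x)‖ ≤ ∫ x in a..b, |r x| :=
    calc ‖∫ x in a..b, e (φ x) * (Complex.I * r x)‖
        ≤ ∫ x in a..b, ‖e (φ x) * (Complex.I * r x)‖ := norm_integral_le_integral_norm hab
      _ = ∫ x in a..b, |r x| := by simp [norm_e]
  rw [hparts]
  grw [norm_sub_le, norm_sub_le, hrem]
  simp [F, norm_e]

theorem norm_integral_e_le_of_le_abs_deriv {φ ψ χ : ℝ → ℝ} {a b lam : ℝ} (hab : a ≤ b)
    (hlam : 0 < lam) (hφ : ContinuousOn φ (Icc a b)) (hψ : ContinuousOn ψ (Icc a b))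
    (hχ : ContinuousOn χ (Icc a b)) (hφ' : ∀ x ∈ Ioo a b, HasDerivAt φ (ψ x) x)
    (hψ' : ∀ x ∈ Ioo a b, HasDerivAt ψ (χ x) x) (hlb : ∀ x ∈ Ioo a b, lam ≤ |ψ x|)
    (hχ_sign : (∀ x ∈ Ioo a b, 0 ≤ χ x) ∨ (∀ x ∈ Ioo a b, χ x ≤ 0)) :
    ‖∫ x in a..b, e (φ x)‖ ≤ 1 / lam := by
  rcases hab.eq_or_lt with rfl | hab'
  · simp [hlam.le]
  have hlb' : ∀ x ∈ Icc a b, lam ≤ |ψ x| := by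
    rw [← closure_Ioo hab'.ne] at hψ ⊢
    exact le_on_closure hlb continuousOn_const hψ.abs
  have hψ0 : ∀ x ∈ Icc a b, ψ x ≠ 0 := fun x hx => abs_pos.1 (hlam.trans_le (hlb' x hx))
  set G : ℝ → ℝ := fun x => -(2 * Real.pi * ψ x)⁻¹
  set r : ℝ → ℝ := fun x => χ x / (2 * Real.pi * ψ x ^ 2)
  have hG : ContinuousOn G (Icc a b) :=
    ((continuousOn_const.mul hψ).inv₀ fun x hx => mul_ne_zero (by positivity) (hψ0 x hx)).neg
  have hr : ContinuousOn r (Icc a b) :=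
    hχ.div (continuousOn_const.mul (hψ.pow 2)) fun x hx => by simp [hψ0 x hx, Real.pi_ne_zero]
  have hG' : ∀ x ∈ Ioo a b, HasDerivAt G (r x) x := fun x hx => by
    have hψx := hψ0 x (Ioo_subset_Icc_self hx)
    refine (((hψ' x hx).const_mul (2 * Real.pi)).inv
      (mul_ne_zero (by positivity) hψx)).neg.congr_deriv ?_
    simp only [r]
    field_simp
  have hψG : ∀ x ∈ Ioo a b, 2 * Real.pi * ψ x * G x = -1 := fun x hx => by
    have hψx := hψ0 x (Ioo_subset_Icc_self hx)
    simp only [G]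
    field_simp
  have hr_sign : (∀ x ∈ Ioo a b, 0 ≤ r x) ∨ (∀ x ∈ Ioo a b, r x ≤ 0) :=
    hχ_sign.imp (fun h x hx => div_nonneg (h x hx) (by positivity))
      (fun h x hx => div_nonpos_of_nonpos_of_nonneg (h x hx) (by positivity))
  have hG_le : ∀ x ∈ Icc a b, |G x| ≤ 1 / (2 * Real.pi * lam) := fun x hx => by
    simp only [G, abs_neg, abs_inv, abs_mul, abs_of_pos Real.pi_pos, abs_two, one_div]
    have := hlb' x hx
    gcongr
  have ha := hG_le a (Set.left_mem_Icc.2 hab)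
  have hb := hG_le b (Set.right_mem_Icc.2 hab)
  calc ‖∫ x in a..b, e (φ x)‖ ≤ |G b| + |G a| + (|G b| + |G a|) := by
        grw [norm_integral_e_le_of_mul_deriv_eq hab hφ hG hr hφ' hG' hψG,
          integral_abs_eq_abs_sub_of_hasDerivAt hab hG hr hG' hr_sign, abs_sub]
    _ ≤ 4 * (1 / (2 * Real.pi * lam)) := by linarith
    _ ≤ 1 / lam := by
        rw [mul_one_div, div_le_div_iff₀ (by positivity) hlam]
        nlinarith [Real.two_le_pi]

lemma mul_abs_sub_le_abs_sub_of_le_abs_deriv {g g' : ℝ → ℝ} {a b lam : ℝ}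
    (hg : ContinuousOn g (Icc a b)) (hg' : ∀ x ∈ Ioo a b, HasDerivAt g (g' x) x)
    (hlb : ∀ x ∈ Ioo a b, lam ≤ |g' x|) {x y : ℝ} (hx : x ∈ Icc a b) (hy : y ∈ Icc a b) :
    lam * |y - x| ≤ |g y - g x| := by
  wlog hxy : x < y generalizing x y
  · rcases (not_lt.1 hxy).eq_or_lt with rfl | hyx
    · simp
    · simpa only [abs_sub_comm] using this hy hx hyx
  obtain ⟨c, hc, hslope⟩ := exists_hasDerivAt_eq_slope g g' hxy
    (hg.mono (Icc_subset_Icc hx.1 hy.2))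
    fun z hz => hg' z ⟨hx.1.trans_lt hz.1, hz.2.trans_le hy.2⟩
  have hc' : c ∈ Ioo a b := ⟨hx.1.trans_lt hc.1, hc.2.trans_le hy.2⟩
  rw [eq_div_iff (sub_pos.2 hxy).ne'] at hslope
  rw [← hslope, abs_mul]
  exact mul_le_mul_of_nonneg_right (hlb c hc') (abs_nonneg _)

lemma IntervalIntegrable.mono_of_le {E : Type*} [NormedAddCommGroup E] {h : ℝ → E}
    {μ : Measure ℝ} {a b p q : ℝ} (hh : IntervalIntegrable h μ a b) (hap : a ≤ p) (hpq : p ≤ q)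
    (hqb : q ≤ b) : IntervalIntegrable h μ p q :=
  hh.mono_set (uIcc_subset_uIcc (mem_uIcc_of_le hap (hpq.trans hqb))
    (mem_uIcc_of_le (hap.trans hpq) hqb))

/-- If the "bad" points of `T` inside `[a, b]` lie within distance `δ` of each other, then
`[a, b]` is the union of two intervals free of `T` and one of length at most `δ`. -/
theorem norm_integral_le_of_diam_le {h : ℝ → ℂ} {T : Set ℝ} {a b δ K : ℝ} (hab : a ≤ b)
    (hh : IntervalIntegrable h volume a b) (hh1 : ∀ x, ‖h x‖ ≤ 1) (hδ : 0 ≤ δ)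
    (hT : ∀ x ∈ T ∩ Icc a b, ∀ y ∈ T ∩ Icc a b, y - x ≤ δ)
    (hK : ∀ p q, a ≤ p → p ≤ q → q ≤ b → (∀ x ∈ Ioo p q, x ∉ T) → ‖∫ x in p..q, h x‖ ≤ K) :
    ‖∫ x in a..b, h x‖ ≤ 2 * K + δ := by
  have hK0 : 0 ≤ K := by simpa using hK a a le_rfl le_rfl hab (by simp)
  by_cases hne : (T ∩ Icc a b).Nonempty
  swap
  · have := hK a b le_rfl hab le_rfl fun x hx hxT =>
      hne ⟨x, hxT, Ioo_subset_Icc_self hx⟩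
    linarith
  have hbdd : BddBelow (T ∩ Icc a b) := bddBelow_Icc.mono inter_subset_right
  have hbdd' : BddAbove (T ∩ Icc a b) := bddAbove_Icc.mono inter_subset_right
  set u := sInf (T ∩ Icc a b)
  set v := sSup (T ∩ Icc a b)
  have hau : a ≤ u := le_csInf hne fun x hx => hx.2.1
  have hvb : v ≤ b := csSup_le hne fun x hx => hx.2.2
  have huv : u ≤ v := csInf_le_csSup hne hbdd hbdd'
  have hvu : v - u ≤ δ := by
    rw [sub_le_iff_le_add]
    refine csSup_le hne fun y hy => ?_
    rw [← sub_le_iff_le_add']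
    exact le_csInf hne fun x hx => by linarith [hT x hx y hy]
  have hleft := hK a u le_rfl hau (huv.trans hvb) fun x hx hxT =>
    (csInf_le hbdd ⟨hxT, hx.1.le, hx.2.le.trans (huv.trans hvb)⟩).not_gt hx.2
  have hright := hK v b (hau.trans huv) hvb le_rfl fun x hx hxT =>
    (le_csSup hbdd' ⟨hxT, (hau.trans huv).trans hx.1.le, hx.2.le⟩).not_gt hx.1
  have hmid := norm_integral_le_sub_of_norm_le_one huv hh1
  rw [← integral_add_adjacent_intervals (hh.mono_of_le le_rfl hau (huv.trans hvb))
      (hh.mono_of_le hau (huv.trans hvb) le_rfl),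
    ← integral_add_adjacent_intervals (hh.mono_of_le hau huv hvb)
      (hh.mono_of_le (hau.trans huv) hvb le_rfl)]
  grw [norm_add_le, norm_add_le]
  linarith

lemma rpow_neg_one_div_mul_rpow_neg_one_div_succ {lam : ℝ} (hlam : 0 < lam) {d : ℕ}
    (hd : 1 ≤ d) :
    (lam * lam ^ (-1 / (d + 1 : ℕ) : ℝ)) ^ (-1 / d : ℝ) = lam ^ (-1 / (d + 1 : ℕ) : ℝ) := by
  have hd' : (1 : ℝ) ≤ d := by exact_mod_cast hd
  have hlt : (1 : ℝ) / (d + 1 : ℕ) < 1 := by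
    rw [div_lt_one (by positivity)]
    push_cast
    linarith
  rw [← Real.rpow_one_add' hlam.le (by rw [neg_div]; linarith), ← Real.rpow_mul hlam.le]
  congr 1
  push_cast
  field_simp
  ring

theorem HasDerivSeqOn.norm_integral_e_le_of_le_abs {f : ℕ → ℝ → ℝ} {a b lam : ℝ} {d : ℕ}
    (hf : HasDerivSeqOn f a b) (hd : 1 ≤ d) (hab : a ≤ b) (hlam : 0 < lam)
    (hlb : ∀ x ∈ Ioo a b, lam ≤ |f d x|)
    (hsign : d = 1 → (∀ x ∈ Ioo a b, 0 ≤ f 2 x) ∨ (∀ x ∈ Ioo a b, f 2 x ≤ 0)) :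
    ‖∫ x in a..b, e (f 0 x)‖ ≤ 4 ^ d * lam ^ (-1 / d : ℝ) := by
  induction d, hd using Nat.le_induction generalizing a b lam with
  | base =>
    grw [norm_integral_e_le_of_le_abs_deriv hab hlam (hf.continuousOn 0) (hf.continuousOn 1)
      (hf.continuousOn 2) (hf.hasDerivAt 0) (hf.hasDerivAt 1) hlb (hsign rfl)]
    simp only [Nat.cast_one, div_one, Real.rpow_neg_one, one_div]
    linarith [inv_pos.2 hlam]
  | succ d hd ih =>
    set δ := lam ^ (-1 / (d + 1 : ℕ) : ℝ)
    have hδ : 0 < δ := Real.rpow_pos_of_pos hlam _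
    have hpiece : ∀ p q, a ≤ p → p ≤ q → q ≤ b →
        (∀ x ∈ Ioo p q, x ∉ {x | |f d x| < lam * δ}) → ‖∫ x in p..q, e (f 0 x)‖ ≤ 4 ^ d * δ := by
      intro p q hap hpq hqb hfree
      have hsign : d = 1 → (∀ x ∈ Ioo p q, 0 ≤ f 2 x) ∨ (∀ x ∈ Ioo p q, f 2 x ≤ 0) := by
        rintro rfl
        exact forall_nonneg_or_forall_nonpos_of_forall_ne_zero
          ((hf.continuousOn 2).mono (Ioo_subset_Icc_self.trans (Icc_subset_Icc hap hqb)))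
          fun x hx => abs_pos.1 (hlam.trans_le (hlb x (Ioo_subset_Ioo hap hqb hx)))
      have := ih (hf.mono hap hqb) hpq (mul_pos hlam hδ) (fun x hx => not_lt.1 (hfree x hx)) hsign
      rwa [rpow_neg_one_div_mul_rpow_neg_one_div_succ hlam hd] at this
    have hdiam : ∀ x ∈ {x | |f d x| < lam * δ} ∩ Icc a b,
        ∀ y ∈ {x | |f d x| < lam * δ} ∩ Icc a b, y - x ≤ 2 * δ := by
      rintro x ⟨hx : |f d x| < lam * δ, hxI⟩ y ⟨hy : |f d y| < lam * δ, hyI⟩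
      have := mul_abs_sub_le_abs_sub_of_le_abs_deriv (hf.continuousOn d) (hf.hasDerivAt d) hlb
        hxI hyI
      have : |f d y - f d x| < lam * (2 * δ) := by
        linarith [abs_sub (f d y) (f d x), hx, hy]
      nlinarith [le_abs_self (y - x)]
    grw [norm_integral_le_of_diam_le (h := fun x => e (f 0 x)) hab
      ((continuous_e.comp_continuousOn (hf.continuousOn 0)).intervalIntegrable_of_Icc hab)
      (fun x => (norm_e _).le) (by positivity) hdiam hpiece, pow_succ]
    nlinarith [one_le_pow₀ (M₀ := ℝ) (n := d) (by norm_num : (1 : ℝ) ≤ 4)]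

/-- Cutting `[a, b]` at the (at most `m`) points of `B` leaves at most `m + 1` pieces. -/
theorem norm_integral_le_of_encard_le {h : ℝ → ℂ} {B : Set ℝ} {a b K : ℝ} {m : ℕ}
    (hB : B.encard ≤ m) (hab : a ≤ b) (hh : IntervalIntegrable h volume a b)
    (hK : ∀ p q, a ≤ p → p ≤ q → q ≤ b → (∀ x ∈ Ioo p q, x ∉ B) → ‖∫ x in p..q, h x‖ ≤ K) :
    ‖∫ x in a..b, h x‖ ≤ (m + 1) * K := by
  induction m generalizing B a with
  | zero =>
    simpa [encard_eq_zero.1 (nonpos_iff_eq_zero.1 hB)] using hK a b le_rfl hab le_rfl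
  | succ m ih =>
    have hK0 : 0 ≤ K := by simpa using hK a a le_rfl le_rfl hab (by simp)
    by_cases hne : (B ∩ Ioo a b).Nonempty
    swap
    · have := hK a b le_rfl hab le_rfl fun x hx hxB => hne ⟨x, hxB, hx⟩
      push_cast
      nlinarith
    obtain ⟨w, ⟨hwB, haw, hwb⟩, hmin⟩ :=
      (B ∩ Ioo a b).exists_min_image id ((finite_of_encard_le_coe hB).inter_of_left _) hne
    have hleft := hK a w le_rfl haw.le hwb.le fun x hx hxB =>
      (hmin x ⟨hxB, hx.1, hx.2.trans hwb⟩).not_gt hx.2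
    have hB' : (B \ {w}).encard ≤ m := by
      rw [← ENat.add_le_add_iff_right ENat.one_ne_top, encard_sdiff_singleton_add_one hwB]
      exact_mod_cast hB
    have hright := ih hB' hwb.le (hh.mono_of_le haw.le hwb.le le_rfl)
      fun p q hwp hpq hqb hfree => hK p q (haw.le.trans hwp) hpq hqb fun x hx hxB =>
        hfree x hx ⟨hxB, (hwp.trans_lt hx.1).ne'⟩
    rw [← integral_add_adjacent_intervals (hh.mono_of_le le_rfl haw.le hwb.le)
      (hh.mono_of_le haw.le hwb.le le_rfl)]
    grw [norm_add_le, hleft, hright]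
    push_cast
    linarith

lemma exists_forall_le_abs_of_forall_abs_ne {X : Type*} [TopologicalSpace X] {s : Set X}
    (hs : IsPreconnected s) {g : ℕ → X → ℝ} {d : ℕ} {lam : ℝ} (hd : 1 ≤ d)
    (hg : ∀ i, ContinuousOn (g i) s)
    (hmax : ∀ x ∈ s, ∃ i, 1 ≤ i ∧ i ≤ d ∧ lam ≤ |g i x|)
    (hne : ∀ x ∈ s, ∀ i, 1 ≤ i → i < d → |g i x| ≠ lam) :
    ∃ i, 1 ≤ i ∧ i ≤ d ∧ ∀ x ∈ s, lam ≤ |g i x| := by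
  by_cases h : ∃ i, 1 ≤ i ∧ i < d ∧ ∃ x ∈ s, lam ≤ |g i x|
  · obtain ⟨i, hi1, hid, x, hx, hix⟩ := h
    refine ⟨i, hi1, hid.le, ?_⟩
    rcases hs.forall_lt_or_forall_gt_of_forall_ne (hg i).abs fun y hy => hne y hy i hi1 hid
      with hlt | hgt
    · exact absurd (hlt x hx) hix.not_gt
    · exact fun y hy => (hgt y hy).le
  · push Not at h
    refine ⟨d, hd, le_rfl, fun x hx => ?_⟩
    obtain ⟨i, hi1, hid, hix⟩ := hmax x hx
    rcases hid.lt_or_eq with hid | rfl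
    · exact absurd hix (h i hi1 hid x hx).not_ge
    · exact hix

lemma min_one_le_four_pow_mul_rpow {lam : ℝ} (hlam : 0 < lam) {i d : ℕ} (hi : 1 ≤ i)
    (hid : i ≤ d) : min 1 (4 ^ i * lam ^ (-1 / i : ℝ)) ≤ 4 ^ d * lam ^ (-1 / d : ℝ) := by
  have h4 : (1 : ℝ) ≤ 4 ^ d := one_le_pow₀ (by norm_num)
  have hexp : (-1 / d : ℝ) ≤ 0 := div_nonpos_of_nonpos_of_nonneg (by norm_num) (by positivity)
  rcases le_or_gt lam 1 with hlam1 | hlam1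
  · have := Real.one_le_rpow_of_pos_of_le_one_of_nonpos hlam hlam1 hexp
    exact (min_le_left _ _).trans (by nlinarith)
  · refine (min_le_right _ _).trans (mul_le_mul (pow_le_pow_right₀ (by norm_num) hid)
      (Real.rpow_le_rpow_of_exponent_le hlam1.le ?_) (by positivity) (by positivity))
    have : (1 : ℝ) ≤ i := by exact_mod_cast hi
    rw [neg_div, neg_div, neg_le_neg_iff]
    gcongr

def cutPoints (f : ℕ → ℝ → ℝ) (d : ℕ) (lam a b : ℝ) : Set ℝ :=
  {x ∈ Icc a b | f 2 x = 0 ∨ ∃ i ∈ Finset.Ico 1 d, |f i x| = lam}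

theorem HasDerivSeqOn.encard_cutPoints_le {f : ℕ → ℝ → ℝ} {a b lam : ℝ} {d k : ℕ}
    (hf : HasDerivSeqOn f a b) (hd : 2 ≤ d) (hzeros : {x ∈ Icc a b | f d x = 0}.encard ≤ k) :
    (cutPoints f d lam a b).encard ≤ ((2 * d + 1) * (k + d) : ℕ) := by
  have hlevel : ∀ i < d, ∀ c, {x ∈ Icc a b | f i x = c}.encard ≤ (k + d : ℕ) := fun i hi c => by
    have := hf.encard_level_le (k := k) i (d - i - 1)
      (by rwa [show i + (d - i - 1) + 1 = d by omega]) c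
    exact this.trans (by norm_cast; omega)
  have hzeros2 : {x ∈ Icc a b | f 2 x = 0}.encard ≤ (k + d : ℕ) := by
    rcases hd.eq_or_lt with rfl | hd
    · exact hzeros.trans (by norm_cast; omega)
    · exact hlevel 2 hd 0
  have hsub : cutPoints f d lam a b ⊆
      {x ∈ Icc a b | f 2 x = 0} ∪ ⋃ i ∈ Finset.Ico 1 d,
        ({x ∈ Icc a b | f i x = lam} ∪ {x ∈ Icc a b | f i x = -lam}) := by
    rintro x ⟨hx, h2 | ⟨i, hi, hix⟩⟩
    · exact Or.inl ⟨hx, h2⟩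
    · exact Or.inr (mem_biUnion hi ((eq_or_eq_neg_of_abs_eq hix).imp (⟨hx, ·⟩) (⟨hx, ·⟩)))
  calc _ ≤ _ := encard_le_encard hsub
    _ ≤ {x ∈ Icc a b | f 2 x = 0}.encard + ∑ i ∈ Finset.Ico 1 d,
          ({x ∈ Icc a b | f i x = lam}.encard + {x ∈ Icc a b | f i x = -lam}.encard) := by
        grw [encard_union_le, Finset.set_encard_biUnion_le]
        gcongr with i
        exact encard_union_le _ _
    _ ≤ (k + d : ℕ) + ∑ i ∈ Finset.Ico 1 d, ((k + d : ℕ) + (k + d : ℕ) : ℕ∞) := by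
        gcongr with i hi <;> exact hlevel i (Finset.mem_Ico.1 hi).2 _
    _ ≤ _ := by
        rw [Finset.sum_const, Nat.card_Ico, nsmul_eq_mul]
        norm_cast
        have := Nat.sub_le d 1
        nlinarith

theorem HasDerivSeqOn.norm_integral_e_le_of_le_max_abs {f : ℕ → ℝ → ℝ} {a b lam : ℝ} {d k : ℕ}
    (hf : HasDerivSeqOn f a b) (hd : 2 ≤ d) (hab : a ≤ b) (hba : b - a ≤ 1) (hlam : 0 < lam)
    (hzeros : {x ∈ Icc a b | f d x = 0}.encard ≤ k)
    (hmax : ∀ x ∈ Icc a b, ∃ i, 1 ≤ i ∧ i ≤ d ∧ lam ≤ |f i x|) :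
    ‖∫ x in a..b, e (f 0 x)‖ ≤ ((2 * d + 1) * (k + d) + 1) * (4 ^ d * lam ^ (-1 / d : ℝ)) := by
  have hint : IntervalIntegrable (fun x => e (f 0 x)) volume a b :=
    (continuous_e.comp_continuousOn (hf.continuousOn 0)).intervalIntegrable_of_Icc hab
  have := norm_integral_le_of_encard_le (hf.encard_cutPoints_le (lam := lam) hd hzeros) hab hint
    fun p q hap hpq hqb hfree => by
      have hsub : Ioo p q ⊆ Icc a b := Ioo_subset_Icc_self.trans (Icc_subset_Icc hap hqb)
      obtain ⟨i, hi1, hid, hi⟩ := exists_forall_le_abs_of_forall_abs_ne isPreconnected_Ioo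
        (d := d) (by omega) (fun i => (hf.continuousOn i).mono hsub)
        (fun x hx => hmax x (hsub hx)) fun x hx i hi1 hid hix =>
          hfree x hx ⟨hsub hx, Or.inr ⟨i, Finset.mem_Ico.2 ⟨hi1, hid⟩, hix⟩⟩
      have hsign := forall_nonneg_or_forall_nonpos_of_forall_ne_zero
        ((hf.continuousOn 2).mono hsub) fun x hx hx0 => hfree x hx ⟨hsub hx, Or.inl hx0⟩
      calc ‖∫ x in p..q, e (f 0 x)‖ ≤ min 1 (4 ^ i * lam ^ (-1 / i : ℝ)) :=
            le_min ((norm_integral_le_sub_of_norm_le_one hpq fun x => (norm_e _).le).trans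
                (by linarith))
              ((hf.mono hap hqb).norm_integral_e_le_of_le_abs hi1 hpq hlam hi fun _ => hsign)
        _ ≤ 4 ^ d * lam ^ (-1 / d : ℝ) := min_one_le_four_pow_mul_rpow hlam hi1 hid
  push_cast at this
  exact this

theorem modified_van_der_corput_general (d k : ℕ) :
    ∃ C > (0 : ℝ), ∀ (A : ℝ), 0 < A → ∀ (φ : ℝ → ℝ) (lam : ℝ),
      ContDiffOn ℝ (⊤ : ℕ∞) φ (Set.Icc A (A + 1)) →
      ({α ∈ Set.Icc A (A + 1) |
          iteratedDerivWithin d φ (Set.Icc A (A + 1)) α = 0}).encard ≤ (k : ℕ∞) →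
      0 < lam →
      (∀ α ∈ Set.Icc A (A + 1), ∃ i, 1 ≤ i ∧ i ≤ d ∧
        lam ≤ |iteratedDerivWithin i φ (Set.Icc A (A + 1)) α|) →
      (d = 1 → MonotoneOn (derivWithin φ (Set.Icc A (A + 1))) (Set.Icc A (A + 1)) ∨
        AntitoneOn (derivWithin φ (Set.Icc A (A + 1))) (Set.Icc A (A + 1))) →
      ‖∫ α in Set.Icc A (A + 1), e (φ α)‖ ≤ C * lam ^ (-(1 : ℝ) / d) := by
  refine ⟨((2 * d + 1) * (k + d) + 1) * 4 ^ d, by positivity, ?_⟩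
  intro A _ φ lam hφ hzeros hlam hmax hmono
  have hf := hφ.hasDerivSeqOn_iteratedDerivWithin (lt_add_one A)
  rw [integral_Icc_eq_integral_Ioc, ← integral_of_le (by linarith), mul_assoc]
  have hd : 1 ≤ d := by
    obtain ⟨i, hi1, hid, -⟩ := hmax A (Set.left_mem_Icc.2 (by linarith))
    omega
  rcases (show d = 1 ∨ 2 ≤ d by omega) with rfl | hd
  · have hlb : ∀ x ∈ Ioo A (A + 1), lam ≤ |iteratedDerivWithin 1 φ (Icc A (A + 1)) x| :=
      fun x hx => by
        obtain ⟨i, hi1, hi, hix⟩ := hmax x (Ioo_subset_Icc_self hx)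
        rwa [show i = 1 by omega] at hix
    have hsign := forall_nonneg_or_forall_nonpos_of_monotoneOn_or_antitoneOn (hf.hasDerivAt 1)
      (by simpa only [iteratedDerivWithin_one] using hmono rfl)
    have := hf.norm_integral_e_le_of_le_abs le_rfl (by linarith) hlam hlb fun _ => hsign
    simp only [iteratedDerivWithin_zero] at this
    refine this.trans (le_mul_of_one_le_left (by positivity) ?_)
    push_cast
    linarith [(k.cast_nonneg : (0 : ℝ) ≤ k)]
  · simpa only [iteratedDerivWithin_zero] using
      hf.norm_integral_e_le_of_le_max_abs hd (by linarith) (by linarith) hlam hzeros hmax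

/-- Modified van der Corput lemma: if on `J = [A,A+1]` at every point one of the first `d`
derivatives of `φ` is at least `λ`, and `φ^{(d)}` has at most `k` zeros in `J`
(with `φ'` monotone if `d = 1`), then `|∫_J e(φ)| ≤ C_{d,k} λ^{-1/d}`. -/
theorem modified_van_der_corput (d k : ℕ) (hd : 1 ≤ d) :
    ∃ C > (0 : ℝ), ∀ (A : ℝ), 0 < A → ∀ (φ : ℝ → ℝ) (lam : ℝ),
      ContDiffOn ℝ (⊤ : ℕ∞) φ (Set.Icc A (A + 1)) →
      ({α ∈ Set.Icc A (A + 1) |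
          iteratedDerivWithin d φ (Set.Icc A (A + 1)) α = 0}).encard ≤ (k : ℕ∞) →
      0 < lam →
      (∀ α ∈ Set.Icc A (A + 1), ∃ i, 1 ≤ i ∧ i ≤ d ∧
        lam ≤ |iteratedDerivWithin i φ (Set.Icc A (A + 1)) α|) →
      (d = 1 → MonotoneOn (derivWithin φ (Set.Icc A (A + 1))) (Set.Icc A (A + 1)) ∨
        AntitoneOn (derivWithin φ (Set.Icc A (A + 1))) (Set.Icc A (A + 1))) →
      ‖∫ α in Set.Icc A (A + 1), e (φ α)‖ ≤ C * lam ^ (-(1 : ℝ) / d) :=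
  modified_van_der_corput_general d k
end

section
/- Let d ≥ 2 be an integer and let 2 ≤ x_1 < x_2 < ⋯ < x_d ≤ N be real numbers; set L_i = log x_i for 1 ≤ i ≤ d, and let V_d be the d×d Vandermonde-type matrix whose (i,j) entry is L_j^i. Let w ∈ ℝ^d and y = V_d w. Then for every ε > 0 there exists a constant C_{d,ε} > 0 depending only on d and ε such that ‖y‖_∞ ≥ C_{d,ε} ‖w‖_∞ x_d^{1−d} N^{−ε} ∏_{m=1}^{d−1} h_m, where h_m = x_{m+1} − x_m and ‖·‖_∞ denotes the maximum norm. -/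
/-!
Write `L j = log x_j` and `y = V_d w`. For each `j`, the coefficients `c_i` of the polynomial
`p_j = ∏_{m ≠ j} (X - L_m)` satisfy `∑ c_i y_i = w_j L_j p_j(L_j)`, since `p_j` vanishes at every
other node. By Vieta, `∑ |c_i| ≤ ∏ (1 + |L_m|) ≤ (1 + log N)^(d-1) ≪_{d,ε} N^ε`. On the other
side `L_j ≥ log 2`, and `|L_j - L_m| ≥ |x_j - x_m| / x_d` is at least the gap `h` between `x_m`
and its neighbour on the side of `x_j`; distinct `m` give distinct gaps, so
`|p_j(L_j)| ≥ x_d^(1-d) ∏ h_m`. Taking the maximum over `j` gives the bound.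
-/

open Finset Polynomial Matrix

section OrderedRing

variable {R : Type*} [CommRing R] [LinearOrder R] [IsStrictOrderedRing R]

theorem Polynomial.abs_coeff_prod_X_sub_C_le {ι : Type*} (s : Finset ι) (a : ι → R) (k : ℕ) :
    |(∏ i ∈ s, (X - C (a i))).coeff k| ≤ (∏ i ∈ s, (X + C |a i|)).coeff k := by
  rcases le_or_gt k #s with hk | hk
  · simp only [sub_eq_add_neg, ← C_neg, Finset.prod_X_add_C_coeff s _ hk]
    refine (abs_sum_le_sum_abs _ _).trans_eq ?_
    simp [abs_prod]
  · have hdeg : (∏ i ∈ s, (X + C |a i|)).natDegree = #s := by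
      rw [natDegree_prod_of_monic _ _ fun i _ => monic_X_add_C _]
      simp
    rw [coeff_eq_zero_of_natDegree_lt, coeff_eq_zero_of_natDegree_lt, abs_zero] <;> simpa [hdeg]

theorem Polynomial.sum_abs_coeff_prod_X_sub_C_le {ι : Type*} (s : Finset ι) (a : ι → R) {n : ℕ}
    (hn : #s < n) :
    ∑ k ∈ range n, |(∏ i ∈ s, (X - C (a i))).coeff k| ≤ ∏ i ∈ s, (1 + |a i|) := by
  have hdeg : (∏ i ∈ s, (X + C |a i|)).natDegree < n := by
    rw [natDegree_prod_of_monic _ _ fun i _ => monic_X_add_C _]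
    simpa
  calc ∑ k ∈ range n, |(∏ i ∈ s, (X - C (a i))).coeff k|
      ≤ ∑ k ∈ range n, (∏ i ∈ s, (X + C |a i|)).coeff k := by
        gcongr with k
        exact abs_coeff_prod_X_sub_C_le s a k
    _ = (∏ i ∈ s, (X + C |a i|)).eval 1 := by simp [eval_eq_sum_range' hdeg]
    _ = ∏ i ∈ s, (1 + |a i|) := by simp [eval_prod]

end OrderedRing

-- The matrix `V_d`: rows are indexed from `0`, so row `i` holds the `(i + 1)`-st powers.
def succVandermonde {R : Type*} [CommSemiring R] {d : ℕ} (v : Fin d → R) :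
    Matrix (Fin d) (Fin d) R :=
  Matrix.of fun i j => v j ^ ((i : ℕ) + 1)

theorem sum_coeff_mul_succVandermonde_mulVec {R : Type*} [CommSemiring R] {d : ℕ} (v w : Fin d → R)
    {p : R[X]} (hp : p.natDegree < d) :
    ∑ i : Fin d, p.coeff i * (succVandermonde v *ᵥ w) i = ∑ k, w k * v k * p.eval (v k) := by
  simp only [eval_eq_sum_range' hp, ← Fin.sum_univ_eq_sum_range, Matrix.mulVec, dotProduct,
    succVandermonde, Matrix.of_apply, mul_sum]
  rw [sum_comm]
  exact sum_congr rfl fun k _ => sum_congr rfl fun i _ => by ring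

theorem abs_mul_prod_abs_sub_le_norm_succVandermonde_mulVec {n : ℕ} (v w : Fin (n + 1) → ℝ)
    (j : Fin (n + 1)) :
    |w j| * |v j| * ∏ i : Fin n, |v j - v (j.succAbove i)| ≤
      (∏ i : Fin n, (1 + |v (j.succAbove i)|)) * ‖succVandermonde v *ᵥ w‖ := by
  set y := succVandermonde v *ᵥ w
  set p : ℝ[X] := ∏ i : Fin n, (X - C (v (j.succAbove i)))
  have hp : p.natDegree < n + 1 := by simp [p]
  have hsum : ∑ i : Fin (n + 1), p.coeff i * y i =
      w j * v j * ∏ i : Fin n, (v j - v (j.succAbove i)) := by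
    rw [sum_coeff_mul_succVandermonde_mulVec v w hp, sum_eq_single j]
    · simp [p, eval_prod]
    · intro k _ hkj
      obtain ⟨i, rfl⟩ := Fin.exists_succAbove_eq hkj
      simp only [p, eval_prod, eval_sub, eval_X, eval_C]
      rw [prod_eq_zero (mem_univ i) (sub_self _), mul_zero]
    · simp
  calc |w j| * |v j| * ∏ i : Fin n, |v j - v (j.succAbove i)|
      = |∑ i : Fin (n + 1), p.coeff i * y i| := by rw [hsum, abs_mul, abs_mul, abs_prod]
    _ ≤ ∑ i : Fin (n + 1), |p.coeff i| * ‖y‖ := by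
        refine (abs_sum_le_sum_abs _ _).trans (sum_le_sum fun i _ => ?_)
        rw [abs_mul]
        gcongr
        exact norm_le_pi_norm y i
    _ = (∑ k ∈ range (n + 1), |p.coeff k|) * ‖y‖ := by
        rw [← sum_mul, Fin.sum_univ_eq_sum_range (fun k => |p.coeff k|)]
    _ ≤ (∏ i : Fin n, (1 + |v (j.succAbove i)|)) * ‖y‖ := by
        gcongr
        exact sum_abs_coeff_prod_X_sub_C_le _ _ (by simp)

theorem Monotone.sub_le_abs_sub_succAbove {α : Type*} [AddCommGroup α] [LinearOrder α]
    [IsOrderedAddMonoid α] {n : ℕ} {x : Fin (n + 1) → α} (hx : Monotone x)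
    (j : Fin (n + 1)) (i : Fin n) :
    x i.succ - x i.castSucc ≤ |x j - x (j.succAbove i)| := by
  rcases lt_or_ge i.castSucc j with h | h
  · rw [Fin.succAbove_of_castSucc_lt j i h]
    have := hx (Fin.castSucc_lt_iff_succ_le.1 h)
    exact (sub_le_sub_right this _).trans (le_abs_self _)
  · rw [Fin.succAbove_of_le_castSucc j i h, abs_sub_comm]
    exact (sub_le_sub_left (hx h) _).trans (le_abs_self _)

theorem Real.abs_sub_div_le_abs_log_sub_log {a b M : ℝ} (ha : 0 < a) (hb : 0 < b) (haM : a ≤ M)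
    (hbM : b ≤ M) : |a - b| / M ≤ |Real.log a - Real.log b| := by
  wlog hba : b ≤ a generalizing a b
  · rw [abs_sub_comm, abs_sub_comm (Real.log a)]
    exact this hb ha hbM haM (le_of_not_ge hba)
  calc |a - b| / M ≤ (a - b) / a := by
        rw [abs_of_nonneg (sub_nonneg.2 hba)]
        gcongr
    _ = 1 - (a / b)⁻¹ := by field_simp
    _ ≤ Real.log (a / b) := Real.one_sub_inv_le_log_of_pos (by positivity)
    _ = Real.log a - Real.log b := Real.log_div ha.ne' hb.ne'
    _ ≤ |Real.log a - Real.log b| := le_abs_self _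

theorem prod_sub_div_pow_le_prod_abs_log_sub_log {n : ℕ} {x : Fin (n + 1) → ℝ}
    (hpos : ∀ m, 0 < x m) (hx : Monotone x) (j : Fin (n + 1)) :
    (∏ i : Fin n, (x i.succ - x i.castSucc)) / x (Fin.last n) ^ n ≤
      ∏ i : Fin n, |Real.log (x j) - Real.log (x (j.succAbove i))| := by
  rw [← Fin.prod_const, ← prod_div_distrib]
  refine prod_le_prod (fun i _ => div_nonneg (sub_nonneg.2 (hx i.castSucc_le_succ)) (hpos _).le)
    fun i _ => ?_
  calc (x i.succ - x i.castSucc) / x (Fin.last n)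
      ≤ |x j - x (j.succAbove i)| / x (Fin.last n) :=
        div_le_div_of_nonneg_right (hx.sub_le_abs_sub_succAbove j i) (hpos _).le
    _ ≤ _ := Real.abs_sub_div_le_abs_log_sub_log (hpos _) (hpos _) (hx (Fin.le_last _))
        (hx (Fin.le_last _))

theorem Real.one_add_log_pow_le {N ε : ℝ} (hN : 1 ≤ N) (hε : 0 < ε) {n : ℕ} (hn : n ≠ 0) :
    (1 + Real.log N) ^ n ≤ (1 + n / ε) ^ n * N ^ ε := by
  set δ := ε / n
  have hδ : 0 < δ := by positivity
  have hlog : 1 + Real.log N ≤ (1 + n / ε) * N ^ δ := by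
    have h1 := Real.log_le_rpow_div (x := N) (by linarith) hδ
    have h2 := Real.one_le_rpow hN hδ.le
    rw [div_eq_mul_inv, show δ⁻¹ = n / ε from inv_div ε n] at h1
    nlinarith [show (0 : ℝ) ≤ n / ε by positivity]
  calc (1 + Real.log N) ^ n ≤ ((1 + n / ε) * N ^ δ) ^ n :=
        pow_le_pow_left₀ (by linarith [Real.log_nonneg hN]) hlog n
    _ = (1 + n / ε) ^ n * N ^ ε := by
        rw [mul_pow, ← Real.rpow_natCast (N ^ δ), ← Real.rpow_mul (by linarith),
          div_mul_cancel₀ ε (Nat.cast_ne_zero.2 hn)]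

theorem log_two_mul_norm_mul_prod_sub_div_pow_le {n : ℕ} {x : Fin (n + 1) → ℝ} {N : ℝ}
    (h2x : ∀ m, 2 ≤ x m) (hx : StrictMono x) (hxN : x (Fin.last n) ≤ N) (w : Fin (n + 1) → ℝ) :
    Real.log 2 * ‖w‖ * ((∏ i : Fin n, (x i.succ - x i.castSucc)) / x (Fin.last n) ^ n) ≤
      (1 + Real.log N) ^ n * ‖succVandermonde (fun j => Real.log (x j)) *ᵥ w‖ := by
  set L : Fin (n + 1) → ℝ := fun j => Real.log (x j)
  set G := (∏ i : Fin n, (x i.succ - x i.castSucc)) / x (Fin.last n) ^ n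
  have hL : ∀ m, Real.log 2 ≤ L m ∧ L m ≤ Real.log N := fun m =>
    ⟨Real.log_le_log two_pos (h2x m),
      Real.log_le_log (by linarith [h2x m]) ((hx.monotone (Fin.le_last m)).trans hxN)⟩
  have hG : 0 < G := div_pos (prod_pos fun i _ => sub_pos.2 (hx i.castSucc_lt_succ))
    (pow_pos (by linarith [h2x (Fin.last n)]) n)
  have hrow : ∀ j, Real.log 2 * G * |w j| ≤ (1 + Real.log N) ^ n * ‖succVandermonde L *ᵥ w‖ := by
    intro j
    calc Real.log 2 * G * |w j|
        ≤ |w j| * |L j| * ∏ i : Fin n, |L j - L (j.succAbove i)| := by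
          rw [mul_comm, mul_assoc]
          gcongr |w j| * ?_
          exact mul_le_mul ((hL j).1.trans (le_abs_self _))
            (prod_sub_div_pow_le_prod_abs_log_sub_log (fun m => by linarith [h2x m])
              hx.monotone j) hG.le (abs_nonneg _)
      _ ≤ (∏ i : Fin n, (1 + |L (j.succAbove i)|)) * ‖succVandermonde L *ᵥ w‖ :=
          abs_mul_prod_abs_sub_le_norm_succVandermonde_mulVec L w j
      _ ≤ (1 + Real.log N) ^ n * ‖succVandermonde L *ᵥ w‖ := by
          rw [← Fin.prod_const]
          gcongr with i
          rw [abs_of_pos ((Real.log_pos one_lt_two).trans_le (hL _).1)]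
          exact (hL _).2
  have hc : 0 < Real.log 2 * G := mul_pos (Real.log_pos one_lt_two) hG
  rw [mul_right_comm, ← le_div_iff₀' hc, pi_norm_le_iff_of_nonempty]
  exact fun j => (le_div_iff₀' hc).2 (hrow j)

/-- Lower bound for `‖V_d w‖_∞` where `V_d` is the Vandermonde-type matrix with entries
`(log x_j)^i`, `1 ≤ i, j ≤ d`. The norm on `Fin d → ℝ` is the sup norm. -/
theorem vandermonde_lower_bound (d : ℕ) (hd : 2 ≤ d) (ε : ℝ) (hε : 0 < ε) :
    ∃ C > (0 : ℝ), ∀ (N : ℝ) (x w : Fin d → ℝ),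
      2 ≤ x ⟨0, by omega⟩ → StrictMono x → x ⟨d - 1, by omega⟩ ≤ N →
      C * ‖w‖ * (x ⟨d - 1, by omega⟩) ^ ((1 : ℝ) - d) * N ^ (-ε) *
          (∏ m : Fin (d - 1),
            (x ⟨m.1 + 1, by have := m.2; omega⟩ - x ⟨m.1, by have := m.2; omega⟩)) ≤
        ‖Matrix.mulVec (Matrix.of fun i j : Fin d => (Real.log (x j)) ^ ((i : ℕ) + 1)) w‖ := by
  obtain ⟨n, rfl⟩ : ∃ n, d = n + 1 := ⟨d - 1, by omega⟩
  set K : ℝ := (1 + n / ε) ^ n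
  refine ⟨Real.log 2 / K, by positivity, fun N x w hx0 hx hxN => ?_⟩
  set X := x (Fin.last n)
  set G := ∏ i : Fin n, (x i.succ - x i.castSucc)
  set y := succVandermonde (fun j => Real.log (x j)) *ᵥ w
  -- `⟨n + 1 - 1, _⟩` unfolds to `Fin.last n`, and `Fin (n + 1 - 1)` to `Fin n`.
  change Real.log 2 / K * ‖w‖ * X ^ ((1 : ℝ) - (n + 1 : ℕ)) * N ^ (-ε) * G ≤ ‖y‖
  have h2x : ∀ m, 2 ≤ x m := fun m => hx0.trans (hx.monotone (Fin.zero_le m))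
  have hX : 0 < X := by linarith [h2x (Fin.last n)]
  have hN : 1 ≤ N := by linarith [h2x (Fin.last n), show X ≤ N from hxN]
  have key : Real.log 2 * ‖w‖ * (G / X ^ n) ≤ K * N ^ ε * ‖y‖ :=
    (log_two_mul_norm_mul_prod_sub_div_pow_le h2x hx hxN w).trans
      (by gcongr; exact Real.one_add_log_pow_le hN hε (by omega))
  rw [Nat.cast_succ, show (1 : ℝ) - (n + 1) = -n by ring, Real.rpow_neg hX.le, Real.rpow_natCast,
    Real.rpow_neg (by linarith)]
  calc Real.log 2 / K * ‖w‖ * (X ^ n)⁻¹ * (N ^ ε)⁻¹ * G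
      = Real.log 2 * ‖w‖ * (G / X ^ n) / (K * N ^ ε) := by ring
    _ ≤ ‖y‖ := by
      rw [div_le_iff₀ (by positivity)]
      linarith
end

section
/- Let A > 0 and J = [A, A+1]. For every ε > 0 there exists a constant C > 0 depending only on ε and A such that for every nonzero real number n and every integer N ≥ 2, (1/N²) Σ_{1 ≤ x_1 ≠ x_2 ≤ N} | ∫_J e(n(x_1^α − x_2^α)) dα | ≤ C · N^{−min(2,A)+ε} / |n|, where the sum is over ordered pairs of distinct integers x_1, x_2 in [1,N]. -/
/-!
Write the integrand as `exp (i φ)` with `φ α = 2π n (x ^ α - y ^ α)`, where `1 ≤ y < x ≤ N` and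
`n > 0` (the other cases follow by conjugation). On `J` the derivative `φ'` is positive and
increasing, so integrating by parts against `1 / (i φ')` bounds the integral by `2 / φ' A`, and the
mean value theorem for `z ↦ z ^ A log z` gives `φ' A ≥ 2π n (x - y) y N ^ (min 2 A - 2)`.
Summing `1 / ((x - y) y)` over the pairs costs twice the square of the harmonic number
`H_N ≤ 1 + log N = O_ε(N ^ (ε / 2))`.
-/

open MeasureTheory Filter Finset

open intervalIntegral

theorem integral_deriv_div_sq_eq_inv_sub_inv {φ' φ'' : ℝ → ℝ} {a b : ℝ}
    (hφ' : ∀ t, HasDerivAt φ' (φ'' t) t) (hφ''c : Continuous φ'')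
    (hpos : ∀ t ∈ Set.uIcc a b, 0 < φ' t) :
    ∫ t in a..b, φ'' t / φ' t ^ 2 = (φ' a)⁻¹ - (φ' b)⁻¹ := by
  have hcont : ContinuousOn (fun t => φ'' t / φ' t ^ 2) (Set.uIcc a b) :=
    hφ''c.continuousOn.div
      ((continuous_iff_continuousAt.2 fun t => (hφ' t).continuousAt).pow 2).continuousOn
      fun t ht => (pow_pos (hpos t ht) 2).ne'
  rw [integral_eq_sub_of_hasDerivAt (f := fun t => -(φ' t)⁻¹)
    (fun t ht => ((hφ' t).inv (hpos t ht).ne').neg.congr_deriv (by ring))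
    hcont.intervalIntegrable]
  ring

theorem integral_exp_mul_I_by_parts {φ φ' φ'' : ℝ → ℝ} {a b : ℝ}
    (hφ : ∀ t, HasDerivAt φ (φ' t) t) (hφ' : ∀ t, HasDerivAt φ' (φ'' t) t)
    (hφ''c : Continuous φ'') (hne : ∀ t ∈ Set.uIcc a b, φ' t ≠ 0) :
    ∫ t in a..b, Complex.exp (φ t * Complex.I) =
      (φ' b * Complex.I)⁻¹ * Complex.exp (φ b * Complex.I) -
        (φ' a * Complex.I)⁻¹ * Complex.exp (φ a * Complex.I) -
        ∫ t in a..b,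
          -(φ'' t * Complex.I) / (φ' t * Complex.I) ^ 2 * Complex.exp (φ t * Complex.I) := by
  have hneI : ∀ t ∈ Set.uIcc a b, (φ' t * Complex.I : ℂ) ≠ 0 := fun t ht =>
    mul_ne_zero (Complex.ofReal_ne_zero.2 (hne t ht)) Complex.I_ne_zero
  have hcφ : Continuous φ := continuous_iff_continuousAt.2 fun t => (hφ t).continuousAt
  have hcφ' : Continuous φ' := continuous_iff_continuousAt.2 fun t => (hφ' t).continuousAt
  rw [← integral_mul_deriv_eq_deriv_mul (u := fun t => ((φ' t : ℂ) * Complex.I)⁻¹)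
    (fun t ht => ((hφ' t).ofReal_comp.mul_const Complex.I).inv (hneI t ht))
    (fun t _ => ((hφ t).ofReal_comp.mul_const Complex.I).cexp)
    ((Continuous.continuousOn (by fun_prop)).div (Continuous.continuousOn (by fun_prop))
      fun t ht => pow_ne_zero 2 (hneI t ht)).intervalIntegrable
    (Continuous.continuousOn (by fun_prop)).intervalIntegrable]
  refine integral_congr fun t ht => ?_
  rw [mul_left_comm, inv_mul_cancel₀ (hneI t ht), mul_one]

theorem norm_integral_exp_mul_I_le_two_div {φ φ' φ'' : ℝ → ℝ} {a b : ℝ} (hab : a ≤ b)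
    (hφ : ∀ t, HasDerivAt φ (φ' t) t) (hφ' : ∀ t, HasDerivAt φ' (φ'' t) t)
    (hφ''c : Continuous φ'') (hφ'a : 0 < φ' a) (hφ'' : ∀ t ∈ Set.Icc a b, 0 ≤ φ'' t) :
    ‖∫ t in a..b, Complex.exp (φ t * Complex.I)‖ ≤ 2 / φ' a := by
  have huIcc := Set.uIcc_of_le hab
  have hmono : MonotoneOn φ' (Set.Icc a b) :=
    monotoneOn_of_hasDerivWithinAt_nonneg (convex_Icc a b)
      (fun t _ => (hφ' t).continuousAt.continuousWithinAt)
      (fun t _ => (hφ' t).hasDerivWithinAt)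
      (fun t ht => hφ'' t (interior_subset ht))
  have hpos : ∀ t ∈ Set.Icc a b, 0 < φ' t := fun t ht =>
    hφ'a.trans_le (hmono ⟨le_rfl, hab⟩ ht ht.1)
  have hboundary : ∀ t ∈ Set.Icc a b,
      ‖(φ' t * Complex.I)⁻¹ * Complex.exp (φ t * Complex.I)‖ = (φ' t)⁻¹ := fun t ht => by
    simp [abs_of_pos (hpos t ht)]
  have hremainder : ‖∫ t in a..b,
      -(φ'' t * Complex.I) / (φ' t * Complex.I) ^ 2 * Complex.exp (φ t * Complex.I)‖ ≤
        (φ' a)⁻¹ - (φ' b)⁻¹ := by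
    refine (intervalIntegral.norm_integral_le_integral_norm hab).trans_eq ?_
    rw [← integral_deriv_div_sq_eq_inv_sub_inv hφ' hφ''c fun t ht => hpos t (huIcc ▸ ht)]
    refine integral_congr fun t ht => ?_
    simp [abs_of_nonneg (hφ'' t (huIcc ▸ ht))]
  rw [integral_exp_mul_I_by_parts hφ hφ' hφ''c fun t ht => (hpos t (huIcc ▸ ht)).ne']
  calc _ ≤ (φ' b)⁻¹ + (φ' a)⁻¹ + ((φ' a)⁻¹ - (φ' b)⁻¹) := by
        refine (norm_sub_le _ _).trans (add_le_add ((norm_sub_le _ _).trans_eq ?_) hremainder)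
        rw [hboundary b ⟨hab, le_rfl⟩, hboundary a ⟨le_rfl, hab⟩]
    _ = 2 / φ' a := by ring

theorem e_neg (t : ℝ) : e (-t) = starRingEnd ℂ (e t) := by
  simp only [e, ← Complex.exp_conj, map_mul, Complex.conj_I, Complex.conj_ofReal, map_ofNat]
  push_cast
  ring_nf

theorem norm_integral_e_neg {X : Type*} [MeasurableSpace X] (μ : Measure X) (f : X → ℝ) :
    ‖∫ x, e (-f x) ∂μ‖ = ‖∫ x, e (f x) ∂μ‖ := by
  simp only [e_neg, integral_conj, Complex.norm_conj]

theorem e_eq_exp_mul_I (t : ℝ) : e t = Complex.exp (↑(2 * Real.pi * t) * Complex.I) := by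
  simp only [e]
  push_cast
  ring_nf

theorem setIntegral_Icc_e_eq {a b : ℝ} (hab : a ≤ b) (f : ℝ → ℝ) :
    ∫ t in Set.Icc a b, e (f t) = ∫ t in a..b, Complex.exp (↑(2 * Real.pi * f t) * Complex.I) := by
  rw [integral_Icc_eq_integral_Ioc, ← intervalIntegral.integral_of_le hab]
  simp only [e_eq_exp_mul_I]

theorem mul_sub_le_rpow_mul_log_sub {α c x y : ℝ} (hα : 0 ≤ α) (hy : 1 ≤ y) (hyx : y ≤ x)
    (hc : ∀ z ∈ Set.Icc y x, c ≤ z ^ (α - 1)) :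
    c * (x - y) ≤ x ^ α * Real.log x - y ^ α * Real.log y := by
  have hderiv : ∀ z ∈ Set.Icc y x, HasDerivAt (fun z => z ^ α * Real.log z)
      (α * z ^ (α - 1) * Real.log z + z ^ (α - 1)) z := fun z hz => by
    have hz : 0 < z := by linarith [hz.1]
    refine ((Real.hasDerivAt_rpow_const (p := α) (Or.inl hz.ne')).mul
      (Real.hasDerivAt_log hz.ne')).congr_deriv ?_
    rw [Real.rpow_sub_one hz.ne', div_eq_mul_inv]
  refine (convex_Icc y x).mul_sub_le_image_sub_of_le_deriv
    (fun z hz => (hderiv z hz).continuousAt.continuousWithinAt)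
    (fun z hz => (hderiv z (interior_subset hz)).differentiableAt.differentiableWithinAt)
    (fun z hz => ?_) y ⟨le_rfl, hyx⟩ x ⟨hyx, le_rfl⟩ hyx
  have hz := interior_subset hz
  have hz1 : 1 ≤ z := hy.trans hz.1
  rw [(hderiv z hz).deriv]
  have : 0 ≤ α * z ^ (α - 1) * Real.log z := by
    have := Real.log_nonneg hz1
    positivity
  linarith [hc z hz]

theorem le_rpow_two_sub_min_mul_rpow {A y z N : ℝ} (hy : 1 ≤ y) (hyz : y ≤ z) (hzN : z ≤ N) :
    y ≤ N ^ (2 - min 2 A) * z ^ (A - 1) := by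
  have hz : 0 < z := by linarith
  rcases le_or_gt 2 A with h2A | hA2
  · rw [min_eq_left h2A, sub_self, Real.rpow_zero, one_mul]
    calc y ≤ z ^ (1 : ℝ) := by rwa [Real.rpow_one]
      _ ≤ z ^ (A - 1) := Real.rpow_le_rpow_of_exponent_le (hy.trans hyz) (by linarith)
  · rw [min_eq_right hA2.le]
    calc y ≤ z ^ (2 - A) * z ^ (A - 1) := by
          rw [← Real.rpow_add hz, show 2 - A + (A - 1) = 1 by ring, Real.rpow_one]; exact hyz
      _ ≤ N ^ (2 - A) * z ^ (A - 1) := by gcongr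

theorem rpow_mul_log_sq_le {α x y : ℝ} (hα : 0 ≤ α) (hy : 1 ≤ y) (hyx : y ≤ x) :
    y ^ α * Real.log y ^ 2 ≤ x ^ α * Real.log x ^ 2 := by
  have hlog := Real.log_nonneg hy
  have : 0 ≤ x ^ α := Real.rpow_nonneg (by linarith) α
  gcongr

theorem norm_integral_e_rpow_sub_le_of_pos {A n x y N : ℝ} (hA : 0 ≤ A) (hn : 0 < n)
    (hy : 1 ≤ y) (hyx : y < x) (hxN : x ≤ N) :
    ‖∫ α in Set.Icc A (A + 1), e (n * (x ^ α - y ^ α))‖ ≤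
      N ^ (2 - min 2 A) / (Real.pi * n * ((x - y) * y)) := by
  have hy0 : 0 < y := by linarith
  have hx0 : 0 < x := by linarith
  have hN0 : 0 < N := by linarith
  have hpow : ∀ z : ℝ, 0 < z → ∀ α, HasDerivAt (fun α : ℝ => z ^ α) (z ^ α * Real.log z) α :=
    fun z hz α => (Real.hasStrictDerivAt_const_rpow hz α).hasDerivAt
  set k := 2 * Real.pi * n with hk
  have hk0 : 0 < k := by positivity
  have hφ : ∀ α : ℝ, HasDerivAt (fun α : ℝ => k * (x ^ α - y ^ α))
      (k * (x ^ α * Real.log x - y ^ α * Real.log y)) α := fun α =>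
    ((hpow x hx0 α).sub (hpow y hy0 α)).const_mul k
  have hφ' : ∀ α : ℝ, HasDerivAt (fun α : ℝ => k * (x ^ α * Real.log x - y ^ α * Real.log y))
      (k * (x ^ α * Real.log x ^ 2 - y ^ α * Real.log y ^ 2)) α := fun α => by
    refine ((((hpow x hx0 α).mul_const (Real.log x)).sub
      ((hpow y hy0 α).mul_const (Real.log y))).const_mul k).congr_deriv ?_
    ring
  have hφ''c : Continuous fun α : ℝ => k * (x ^ α * Real.log x ^ 2 - y ^ α * Real.log y ^ 2) := by
    have := Real.continuous_const_rpow hx0.ne'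
    have := Real.continuous_const_rpow hy0.ne'
    fun_prop
  have hφ'' : ∀ α ∈ Set.Icc A (A + 1),
      0 ≤ k * (x ^ α * Real.log x ^ 2 - y ^ α * Real.log y ^ 2) := fun α hα =>
    mul_nonneg hk0.le (sub_nonneg.2 (rpow_mul_log_sq_le (hA.trans hα.1) hy hyx.le))
  set c := y / N ^ (2 - min 2 A) * (x - y)
  have hc : 0 < c := by have : 0 < x - y := sub_pos.2 hyx; positivity
  have hφ'A : k * c ≤ k * (x ^ A * Real.log x - y ^ A * Real.log y) :=
    mul_le_mul_of_nonneg_left (mul_sub_le_rpow_mul_log_sub hA hy hyx.le fun z hz =>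
      (div_le_iff₀' (by positivity)).2 (le_rpow_two_sub_min_mul_rpow hy hz.1 (hz.2.trans hxN)))
      hk0.le
  simp_rw [setIntegral_Icc_e_eq (by linarith : A ≤ A + 1), ← mul_assoc (2 * Real.pi) n, ← hk]
  calc _ ≤ 2 / (k * (x ^ A * Real.log x - y ^ A * Real.log y)) :=
        norm_integral_exp_mul_I_le_two_div (a := A) (b := A + 1) (by linarith) hφ hφ' hφ''c
          ((mul_pos hk0 hc).trans_le hφ'A) hφ''
    _ ≤ 2 / (k * c) := div_le_div_of_nonneg_left zero_le_two (mul_pos hk0 hc) hφ'A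
    _ = N ^ (2 - min 2 A) / (Real.pi * n * ((x - y) * y)) := by
        simp only [c, hk]
        field_simp

theorem norm_integral_e_rpow_sub_le {A n x y N : ℝ} (hA : 0 ≤ A) (hn : n ≠ 0)
    (hy : 1 ≤ y) (hyx : y < x) (hxN : x ≤ N) :
    ‖∫ α in Set.Icc A (A + 1), e (n * (x ^ α - y ^ α))‖ ≤
      N ^ (2 - min 2 A) / (Real.pi * |n| * ((x - y) * y)) := by
  rcases hn.lt_or_gt with hneg | hpos
  · rw [abs_of_neg hneg]
    simpa only [neg_mul, neg_neg, norm_integral_e_neg] using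
      norm_integral_e_rpow_sub_le_of_pos hA (neg_pos.2 hneg) hy hyx hxN
  · rw [abs_of_pos hpos]
    exact norm_integral_e_rpow_sub_le_of_pos hA hpos hy hyx hxN

theorem sum_sum_erase_eq_sum_sum_Ioc {M : Type*} [AddCommMonoid M] (F : ℕ → ℕ → M) (a b : ℕ) :
    ∑ i ∈ Icc a b, ∑ j ∈ (Icc a b).erase i, F i j =
      ∑ i ∈ Icc a b, ∑ j ∈ Ioc i b, (F i j + F j i) := by
  have hsplit : ∀ i ∈ Icc a b, (Icc a b).erase i = Ico a i ∪ Ioc i b := fun i hi => by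
    ext j
    simp only [mem_Icc, mem_erase, mem_union, mem_Ico, mem_Ioc] at hi ⊢
    omega
  have hdisj : ∀ i, Disjoint (Ico a i) (Ioc i b) := fun i =>
    disjoint_left.2 fun j hj hj' => by simp only [mem_Ico, mem_Ioc] at hj hj'; omega
  have hswap : ∑ i ∈ Icc a b, ∑ j ∈ Ico a i, F i j = ∑ i ∈ Icc a b, ∑ j ∈ Ioc i b, F j i :=
    sum_comm' fun i j => by simp only [mem_Icc, mem_Ico, mem_Ioc]; omega
  rw [sum_congr rfl fun i hi => by rw [hsplit i hi, sum_union (hdisj i)]]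
  simp only [sum_add_distrib]
  rw [hswap, add_comm]

theorem sum_Ioc_inv_sub_le_harmonic (i N : ℕ) :
    ∑ j ∈ Ioc i N, ((j : ℝ) - i)⁻¹ ≤ harmonic N := by
  rw [harmonic_eq_sum_Icc]
  push_cast
  calc ∑ j ∈ Ioc i N, ((j : ℝ) - i)⁻¹ = ∑ d ∈ Icc 1 (N - i), ((d : ℝ))⁻¹ := by
        refine sum_nbij' (fun j => j - i) (fun d => d + i) ?_ ?_ ?_ ?_ ?_ <;>
          intro j hj <;> simp only [mem_Ioc, mem_Icc] at hj ⊢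
        all_goals first | omega | rw [Nat.cast_sub (by omega)]
    _ ≤ ∑ d ∈ Icc 1 N, ((d : ℝ))⁻¹ :=
        sum_le_sum_of_subset_of_nonneg (Icc_subset_Icc le_rfl (Nat.sub_le N i))
          fun _ _ _ => by positivity

theorem sum_sum_erase_le_two_mul_harmonic_sq {F : ℕ → ℕ → ℝ} {B : ℝ} (N : ℕ) (hB : 0 ≤ B)
    (hsymm : ∀ i j, F i j = F j i)
    (hF : ∀ i ∈ Icc 1 N, ∀ j ∈ Ioc i N, F j i ≤ B / ((j - i) * i)) :
    ∑ i ∈ Icc 1 N, ∑ j ∈ (Icc 1 N).erase i, F i j ≤ 2 * B * harmonic N ^ 2 := by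
  rw [sum_sum_erase_eq_sum_sum_Ioc]
  calc ∑ i ∈ Icc 1 N, ∑ j ∈ Ioc i N, (F i j + F j i)
      ≤ ∑ i ∈ Icc 1 N, 2 * B * (i : ℝ)⁻¹ * ∑ j ∈ Ioc i N, ((j : ℝ) - i)⁻¹ := by
        gcongr with i hi
        rw [mul_sum]
        gcongr with j hj
        rw [hsymm i j, ← two_mul, mul_assoc, mul_assoc, ← mul_inv, mul_comm (i : ℝ),
          ← div_eq_mul_inv]
        exact mul_le_mul_of_nonneg_left (hF i hi j hj) zero_le_two
    _ ≤ ∑ i ∈ Icc 1 N, 2 * B * (i : ℝ)⁻¹ * harmonic N := by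
        gcongr with i hi
        exact sum_Ioc_inv_sub_le_harmonic i N
    _ = 2 * B * harmonic N ^ 2 := by
        rw [← sum_mul, ← mul_sum, harmonic_eq_sum_Icc]
        push_cast
        ring

theorem harmonic_le_mul_rpow (N : ℕ) {δ : ℝ} (hδ : 0 < δ) :
    (harmonic N : ℝ) ≤ (1 + δ⁻¹) * N ^ δ := by
  rcases N.eq_zero_or_pos with rfl | hN
  · simp [Real.zero_rpow hδ.ne']
  have h1 : 1 ≤ (N : ℝ) ^ δ := Real.one_le_rpow (by exact_mod_cast hN) hδ.le
  calc (harmonic N : ℝ) ≤ 1 + Real.log N := harmonic_le_one_add_log N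
    _ ≤ N ^ δ + N ^ δ / δ := add_le_add h1 (Real.log_le_rpow_div (Nat.cast_nonneg N) hδ)
    _ = (1 + δ⁻¹) * N ^ δ := by ring

theorem oscillating_pair_sum_bound (A : ℝ) (hA : 0 < A) (ε : ℝ) (hε : 0 < ε) :
    ∃ C > (0 : ℝ), ∀ n : ℝ, n ≠ 0 → ∀ N : ℕ, 2 ≤ N →
      ((N : ℝ) ^ 2)⁻¹ * ∑ x₁ ∈ Finset.Icc 1 N, ∑ x₂ ∈ (Finset.Icc 1 N).erase x₁,
          ‖∫ α in Set.Icc A (A + 1), e (n * ((x₁ : ℝ) ^ α - (x₂ : ℝ) ^ α))‖ ≤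
        C * (N : ℝ) ^ (-min 2 A + ε) / |n| := by
  refine ⟨2 * (1 + (ε / 2)⁻¹) ^ 2 / Real.pi, by positivity, fun n hn N hN => ?_⟩
  have hN0 : (0 : ℝ) < N := by positivity
  set B := (N : ℝ) ^ (2 - min 2 A) / (Real.pi * |n|) with hB
  have hsum := sum_sum_erase_le_two_mul_harmonic_sq
    (F := fun x₁ x₂ => ‖∫ α in Set.Icc A (A + 1), e (n * ((x₁ : ℝ) ^ α - (x₂ : ℝ) ^ α))‖)
    (B := B) N (by positivity)
    (fun i j => by rw [← norm_integral_e_neg]; simp only [← mul_neg, neg_sub])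
    (fun i hi j hj => by
      simp only [mem_Icc, mem_Ioc] at hi hj
      rw [hB, div_div]
      exact norm_integral_e_rpow_sub_le hA.le hn (Nat.one_le_cast.2 hi.1)
        (Nat.cast_lt.2 hj.1) (Nat.cast_le.2 hj.2))
  have hH₀ : (0 : ℝ) ≤ harmonic N := by exact_mod_cast (harmonic_pos (by omega)).le
  have hH := harmonic_le_mul_rpow N (half_pos hε)
  have hpow : ((N : ℝ) ^ 2)⁻¹ * N ^ (2 - min 2 A) * (N ^ (ε / 2)) ^ 2 = N ^ (-min 2 A + ε) := by
    rw [← Real.rpow_natCast, ← Real.rpow_natCast, ← Real.rpow_mul hN0.le, ← Real.rpow_neg hN0.le,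
      ← Real.rpow_add hN0, ← Real.rpow_add hN0]
    ring_nf
  calc ((N : ℝ) ^ 2)⁻¹ * _ ≤ ((N : ℝ) ^ 2)⁻¹ * (2 * B * harmonic N ^ 2) := by gcongr
    _ ≤ ((N : ℝ) ^ 2)⁻¹ * (2 * B * ((1 + (ε / 2)⁻¹) * N ^ (ε / 2)) ^ 2) := by gcongr
    _ = 2 * (1 + (ε / 2)⁻¹) ^ 2 / Real.pi * (N : ℝ) ^ (-min 2 A + ε) / |n| := by
        rw [← hpow, hB]
        field_simp
end

section
/- Let k ≥ 2 and let (ϑ_n)_{n≥1} be a real sequence. Suppose there is a strictly increasing sequence (N_m)_{m≥1} of positive integers with N_{m+1}/N_m → 1 as m → ∞, such that for every smooth compactly supported f : ℝ^{k−1} → ℝ one has R_k(f,(ϑ_n),N_m) → ∫_{ℝ^{k−1}} f(x) dx as m → ∞. Then for every smooth compactly supported f : ℝ^{k−1} → ℝ, R_k(f,(ϑ_n),N) → ∫_{ℝ^{k−1}} f(x) dx as N → ∞; moreover the same convergence holds when f is the indicator function 1_Π of any box Π = [a_1,b_1] × ⋯ × [a_{k−1},b_{k−1}] ⊆ ℝ^{k−1}.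 -/
/-!
For `f ≥ 0`, enlarging `N` only adds nonnegative terms to the sum over tuples, and rescaling the
argument of a Lipschitz `f` from `N` to a nearby `N'` costs at most `O(|N'/N - 1|)` times a bump
`χ` equal to `1` on a ball around the support. Hence for `N_j ≤ N ≤ N_{j+1}` the quantity
`N * R_k(f, N)` is squeezed between `N_j * R_k(f - ε_j χ, N_j)` and
`N_{j+1} * R_k(f + ε_j χ, N_{j+1})` with `ε_j = O(N_{j+1}/N_j - 1) → 0`, and `N_j / N → 1`.
A general smooth `f` is a difference of two nonnegative ones, and a box indicator is squeezed
between smooth functions whose integrals approach the volume of the box from both sides, because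
the open and the closed box have the same volume.
-/

open MeasureTheory Filter Finset

/-- The set of `k`-tuples of pairwise distinct integers in `[1,N]`. -/
def Xk (k N : ℕ) : Finset (Fin k → ℕ) :=
  (Fintype.piFinset fun _ => Finset.Icc 1 N).filter Function.Injective

/-- The `k`-level correlation sum `R_k(f, (ϑ_n), N)`. -/
noncomputable def corrSum (k : ℕ) (f : (Fin (k - 1) → ℝ) → ℝ) (ϑ : ℕ → ℝ) (N : ℕ) : ℝ :=
  (N : ℝ)⁻¹ * ∑ x ∈ Xk k N, ∑' m : Fin (k - 1) → ℤ,
    f fun i => (N : ℝ) *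
      ((ϑ (x ⟨i.1, by have := i.2; omega⟩) - ϑ (x ⟨i.1 + 1, by have := i.2; omega⟩)) - (m i : ℝ))

open Metric Topology
open scoped NNReal

noncomputable def diffVec (k : ℕ) (ϑ : ℕ → ℝ) (x : Fin k → ℕ) : Fin (k - 1) → ℝ :=
  fun i => ϑ (x ⟨i.1, by have := i.2; omega⟩) - ϑ (x ⟨i.1 + 1, by have := i.2; omega⟩)

section LatticeSum

variable {α ι : Type*} {X Y : Finset α} {d : α → ι → ℝ} {f g : (ι → ℝ) → ℝ}
  {s t : ℝ}

noncomputable def latticeSum (X : Finset α) (d : α → ι → ℝ) (f : (ι → ℝ) → ℝ) (t : ℝ) : ℝ :=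
  ∑ x ∈ X, ∑' m : ι → ℤ, f (t • (d x - (↑) ∘ m))

theorem summable_comp_smul_sub_intCast [Finite ι] (hf : HasCompactSupport f) (ht : t ≠ 0)
    (v : ι → ℝ) :
    Summable fun m : ι → ℤ => f (t • (v - (↑) ∘ m)) := by
  let φ : (ι → ℝ) ≃ₜ (ι → ℝ) := (Homeomorph.subLeft v).trans (Homeomorph.smulOfNeZero t ht)
  have hcast : IsClosedEmbedding (Pi.map fun _ : ι => ((↑) : ℤ → ℝ)) :=
    .piMap fun _ => Int.isClosedEmbedding_coe_real
  have h := (hf.comp_homeomorph φ).comp_isClosedEmbedding hcast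
  exact summable_of_hasFiniteSupport (h.isCompact.finite_of_discrete.subset (subset_tsupport _))

theorem latticeSum_add [Finite ι] (hf : HasCompactSupport f) (hg : HasCompactSupport g)
    (ht : t ≠ 0) :
    latticeSum X d (f + g) t = latticeSum X d f t + latticeSum X d g t := by
  simp only [latticeSum, ← Finset.sum_add_distrib]
  exact Finset.sum_congr rfl fun x _ =>
    (summable_comp_smul_sub_intCast hf ht _).tsum_add (summable_comp_smul_sub_intCast hg ht _)

theorem latticeSum_smul (c : ℝ) : latticeSum X d (c • f) t = c * latticeSum X d f t := by
  simp only [latticeSum, Finset.mul_sum, ← tsum_mul_left]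
  rfl

theorem latticeSum_le_latticeSum [Finite ι] (hXY : X ⊆ Y) (hf : HasCompactSupport f)
    (hg : HasCompactSupport g) (hs : s ≠ 0) (ht : t ≠ 0) (hg0 : 0 ≤ g)
    (hfg : ∀ y, f (s • y) ≤ g (t • y)) : latticeSum X d f s ≤ latticeSum Y d g t :=
  calc latticeSum X d f s ≤ latticeSum X d g t :=
        Finset.sum_le_sum fun _ _ => (summable_comp_smul_sub_intCast hf hs _).tsum_le_tsum
          (fun _ => hfg _) (summable_comp_smul_sub_intCast hg ht _)
    _ ≤ latticeSum Y d g t :=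
        Finset.sum_le_sum_of_subset_of_nonneg hXY fun _ _ _ => tsum_nonneg fun _ => hg0 _

end LatticeSum

theorem corrSum_eq_inv_mul_latticeSum (k : ℕ) (f : (Fin (k - 1) → ℝ) → ℝ) (ϑ : ℕ → ℝ) (N : ℕ) :
    corrSum k f ϑ N = (N : ℝ)⁻¹ * latticeSum (Xk k N) (diffVec k ϑ) f N :=
  rfl

theorem Xk_mono (k : ℕ) {N M : ℕ} (h : N ≤ M) : Xk k N ⊆ Xk k M :=
  Finset.filter_subset_filter _ <|
    Fintype.piFinset_subset _ _ fun _ => Finset.Icc_subset_Icc le_rfl h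

section CorrSum

variable {k : ℕ} {ϑ : ℕ → ℝ} {f g : (Fin (k - 1) → ℝ) → ℝ}

theorem natCast_mul_corrSum {N : ℕ} (hN : N ≠ 0) :
    N * corrSum k f ϑ N = latticeSum (Xk k N) (diffVec k ϑ) f N :=
  mul_inv_cancel_left₀ (Nat.cast_ne_zero.2 hN) _

theorem corrSum_nonneg (hf0 : 0 ≤ f) (N : ℕ) : 0 ≤ corrSum k f ϑ N :=
  mul_nonneg (by positivity) (Finset.sum_nonneg fun _ _ => tsum_nonneg fun _ => hf0 _)

theorem corrSum_add (hf : HasCompactSupport f) (hg : HasCompactSupport g) (N : ℕ) :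
    corrSum k (f + g) ϑ N = corrSum k f ϑ N + corrSum k g ϑ N := by
  rcases eq_or_ne N 0 with rfl | hN
  · simp [corrSum_eq_inv_mul_latticeSum]
  · simp only [corrSum_eq_inv_mul_latticeSum, latticeSum_add hf hg (Nat.cast_ne_zero.2 hN),
      mul_add]

theorem corrSum_mono (hf : HasCompactSupport f) (hg : HasCompactSupport g) (hg0 : 0 ≤ g)
    (hfg : f ≤ g) (N : ℕ) : corrSum k f ϑ N ≤ corrSum k g ϑ N := by
  rcases eq_or_ne N 0 with rfl | hN
  · simp [corrSum_eq_inv_mul_latticeSum]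
  · have hN' : (N : ℝ) ≠ 0 := Nat.cast_ne_zero.2 hN
    exact mul_le_mul_of_nonneg_left
      (latticeSum_le_latticeSum subset_rfl hf hg hN' hN' hg0 fun _ => hfg _) (by positivity)

end CorrSum

theorem abs_comp_smul_sub_le {E : Type*} [NormedAddCommGroup E] [NormedSpace ℝ E]
    {f χ : E → ℝ} {L : ℝ≥0} {R c δ : ℝ} (hf : LipschitzWith L f) (hR : 0 ≤ R)
    (hfR : tsupport f ⊆ closedBall 0 R) (hχ : (closedBall (0 : E) (2 * R)).indicator 1 ≤ χ)
    (hc : 1 / 2 ≤ c) (hcδ : |c - 1| ≤ δ) (z : E) :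
    |f (c • z) - f z| ≤ 2 * L * R * δ * χ z := by
  have hδ : 0 ≤ δ := (abs_nonneg _).trans hcδ
  have hχ0 : 0 ≤ χ z := (Set.indicator_nonneg (fun _ _ => zero_le_one) z).trans (hχ z)
  by_cases hz : ‖z‖ ≤ 2 * R
  · have hχz : 1 ≤ χ z := by
      simpa [Set.indicator_of_mem (mem_closedBall_zero_iff.2 hz)] using hχ z
    calc |f (c • z) - f z| ≤ L * ‖c • z - z‖ := by
          simpa [dist_eq_norm] using hf.dist_le_mul (c • z) z
      _ = L * (|c - 1| * ‖z‖) := by rw [← Real.norm_eq_abs, ← norm_smul, sub_smul, one_smul]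
      _ ≤ L * (δ * (2 * R)) := by gcongr
      _ = 2 * L * R * δ * 1 := by ring
      _ ≤ 2 * L * R * δ * χ z := by gcongr
  · have hzero : ∀ w : E, R < ‖w‖ → f w = 0 := fun w hw =>
      image_eq_zero_of_notMem_tsupport fun h => (mem_closedBall_zero_iff.1 (hfR h)).not_gt hw
    have hcz : R < ‖c • z‖ := by
      rw [norm_smul, Real.norm_eq_abs, abs_of_pos (by linarith)]
      nlinarith
    rw [hzero z (by linarith), hzero _ hcz, sub_zero, abs_zero]
    positivity

section Dilation

variable {α ι : Type*} [Fintype ι] {X Y : Finset α} {d : α → ι → ℝ} {f χ : (ι → ℝ) → ℝ}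
  {L : ℝ≥0} {R s t δ : ℝ}

theorem latticeSum_le_add_of_dilation (hf : LipschitzWith L f) (hR : 0 ≤ R)
    (hfR : tsupport f ⊆ closedBall 0 R) (hf0 : 0 ≤ f)
    (hχ : (closedBall 0 (2 * R)).indicator 1 ≤ χ) (hχc : HasCompactSupport χ) (hXY : X ⊆ Y)
    (hs : 0 < s) (hst : s ≤ t) (hts : t ≤ 2 * s) (hδ : t / s - 1 ≤ δ) :
    latticeSum X d f s ≤ latticeSum Y d f t + 2 * L * R * δ * latticeSum Y d χ t := by
  have ht : 0 < t := hs.trans_le hst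
  have hfc : HasCompactSupport f := (isCompact_closedBall 0 R).of_isClosed_subset
    (isClosed_tsupport f) hfR
  have hχ0 : 0 ≤ χ := fun z => (Set.indicator_nonneg (fun _ _ => zero_le_one) z).trans (hχ z)
  have hc : |s / t - 1| ≤ δ := by
    rw [abs_sub_comm, abs_of_nonneg (by rw [sub_nonneg, div_le_one ht]; exact hst)]
    calc 1 - s / t = (t - s) / t := by field_simp
      _ ≤ (t - s) / s := div_le_div_of_nonneg_left (by linarith) hs hst
      _ = t / s - 1 := by field_simp
      _ ≤ δ := hδ
  have hε : 0 ≤ 2 * L * R * δ := by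
    have : 0 ≤ δ := (abs_nonneg _).trans hc
    positivity
  have hεχc : HasCompactSupport ((2 * L * R * δ) • χ) :=
    hχc.mono (Function.support_const_smul_subset _ _)
  rw [← latticeSum_smul, ← latticeSum_add hfc hεχc ht.ne']
  refine latticeSum_le_latticeSum hXY hfc (hfc.add hεχc) hs.ne' ht.ne'
    (add_nonneg hf0 (smul_nonneg hε hχ0)) fun y => ?_
  have key := abs_comp_smul_sub_le hf hR hfR hχ
    (by rw [le_div_iff₀ ht]; linarith) hc (t • y)
  rw [smul_smul, div_mul_cancel₀ _ ht.ne'] at key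
  simp only [Pi.add_apply, Pi.smul_apply, smul_eq_mul]
  linarith [(abs_le.1 key).2]

theorem sub_le_latticeSum_of_dilation (hf : LipschitzWith L f) (hR : 0 ≤ R)
    (hfR : tsupport f ⊆ closedBall 0 R) (hf0 : 0 ≤ f)
    (hχ : (closedBall 0 (2 * R)).indicator 1 ≤ χ) (hχc : HasCompactSupport χ) (hXY : X ⊆ Y)
    (hs : 0 < s) (hst : s ≤ t) (hδ : t / s - 1 ≤ δ) :
    latticeSum X d f s - 2 * L * R * δ * latticeSum X d χ s ≤ latticeSum Y d f t := by
  have ht : 0 < t := hs.trans_le hst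
  have hfc : HasCompactSupport f := (isCompact_closedBall 0 R).of_isClosed_subset
    (isClosed_tsupport f) hfR
  have hc : |t / s - 1| ≤ δ := by
    rwa [abs_of_nonneg (by rw [sub_nonneg, le_div_iff₀ hs]; linarith)]
  have hεχc : HasCompactSupport (-(2 * L * R * δ) • χ) :=
    hχc.mono (Function.support_const_smul_subset _ _)
  rw [sub_eq_add_neg, ← neg_mul, ← latticeSum_smul, ← latticeSum_add hfc hεχc hs.ne']
  refine latticeSum_le_latticeSum hXY (hfc.add hεχc) hfc hs.ne' ht.ne' hf0 fun y => ?_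
  have key := abs_comp_smul_sub_le hf hR hfR hχ
    (by rw [le_div_iff₀ hs]; linarith) hc (s • y)
  rw [smul_smul, div_mul_cancel₀ _ hs.ne'] at key
  simp only [Pi.add_apply, Pi.smul_apply, smul_eq_mul]
  linarith [(abs_le.1 key).1]

end Dilation

theorem corrSum_bracket {k : ℕ} {ϑ : ℕ → ℝ} {f χ : (Fin (k - 1) → ℝ) → ℝ} {L : ℝ≥0} {R : ℝ}
    (hf : LipschitzWith L f) (hR : 0 ≤ R) (hfR : tsupport f ⊆ closedBall 0 R)
    (hf0 : 0 ≤ f) (hχ : (closedBall 0 (2 * R)).indicator 1 ≤ χ) (hχc : HasCompactSupport χ)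
    {N₁ N N₂ : ℕ} (h₁ : 0 < N₁) (h₁N : N₁ ≤ N) (hN₂ : N ≤ N₂) (h₂ : N₂ ≤ 2 * N₁) :
    N₁ * (corrSum k f ϑ N₁ - 2 * L * R * (N₂ / N₁ - 1) * corrSum k χ ϑ N₁) ≤
        N * corrSum k f ϑ N ∧
      N * corrSum k f ϑ N ≤
        N₁ * (N₂ / N₁ * (corrSum k f ϑ N₂ + 2 * L * R * (N₂ / N₁ - 1) * corrSum k χ ϑ N₂)) := by
  have hN₁ : (0 : ℝ) < N₁ := Nat.cast_pos.2 h₁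
  have hN : (0 : ℝ) < N := Nat.cast_pos.2 (h₁.trans_le h₁N)
  have hN₁N : (N₁ : ℝ) ≤ N := Nat.cast_le.2 h₁N
  have hNN₂ : (N : ℝ) ≤ N₂ := Nat.cast_le.2 hN₂
  have hδ₁ : (N : ℝ) / N₁ - 1 ≤ N₂ / N₁ - 1 := by gcongr
  have hδ₂ : (N₂ : ℝ) / N - 1 ≤ N₂ / N₁ - 1 := by gcongr
  set ε := 2 * L * R * ((N₂ : ℝ) / N₁ - 1)
  have hN₂0 : N₂ ≠ 0 := by omega
  have hlower : (N₁ : ℝ) * (corrSum k f ϑ N₁ - ε * corrSum k χ ϑ N₁) =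
      latticeSum (Xk k N₁) (diffVec k ϑ) f N₁ - ε * latticeSum (Xk k N₁) (diffVec k ϑ) χ N₁ := by
    rw [← natCast_mul_corrSum h₁.ne', ← natCast_mul_corrSum h₁.ne']
    ring
  have hupper : (N₁ : ℝ) * (N₂ / N₁ * (corrSum k f ϑ N₂ + ε * corrSum k χ ϑ N₂)) =
      latticeSum (Xk k N₂) (diffVec k ϑ) f N₂ + ε * latticeSum (Xk k N₂) (diffVec k ϑ) χ N₂ := by
    rw [← natCast_mul_corrSum hN₂0, ← natCast_mul_corrSum hN₂0, ← mul_assoc,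
      mul_div_cancel₀ _ hN₁.ne']
    ring
  rw [hlower, hupper, natCast_mul_corrSum (h₁.trans_le h₁N).ne']
  exact ⟨sub_le_latticeSum_of_dilation hf hR hfR hf0 hχ hχc (Xk_mono k h₁N) hN₁ hN₁N hδ₁,
    latticeSum_le_add_of_dilation hf hR hfR hf0 hχ hχc (Xk_mono k hN₂) hN hNN₂
      (by exact_mod_cast (by omega : N₂ ≤ 2 * N)) hδ₂⟩

theorem StrictMono.exists_index_bracket {Nm : ℕ → ℕ} (hmono : StrictMono Nm) :
    ∃ φ : ℕ → ℕ, Tendsto φ atTop atTop ∧ ∀ᶠ N in atTop, Nm (φ N) ≤ N ∧ N < Nm (φ N + 1) := by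
  classical
  refine ⟨fun N => Nat.findGreatest (fun j => Nm j ≤ N) N, ?_, ?_⟩
  · exact tendsto_atTop_atTop.2 fun j =>
      ⟨Nm j, fun N hN => Nat.le_findGreatest ((hmono.id_le j).trans hN) hN⟩
  · filter_upwards [eventually_ge_atTop (Nm 0)] with N hN
    refine ⟨Nat.findGreatest_spec (P := fun j => Nm j ≤ N) (Nat.zero_le N) hN, ?_⟩
    by_contra! h
    exact (Nat.lt_succ_self _).not_ge
      (Nat.le_findGreatest (P := fun j => Nm j ≤ N) ((hmono.id_le _).trans h) h)

theorem tendsto_of_bracket {Nm : ℕ → ℕ} (hmono : StrictMono Nm)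
    (hratio : Tendsto (fun j => (Nm (j + 1) : ℝ) / Nm j) atTop (𝓝 1)) {a l u : ℕ → ℝ} {I : ℝ}
    (hl : Tendsto l atTop (𝓝 I)) (hu : Tendsto u atTop (𝓝 I))
    (hb : ∀ᶠ j in atTop, ∀ N, Nm j ≤ N → N ≤ Nm (j + 1) →
      Nm j * l j ≤ N * a N ∧ N * a N ≤ Nm j * u j) :
    Tendsto a atTop (𝓝 I) := by
  obtain ⟨φ, hφ, hφN⟩ := hmono.exists_index_bracket
  have hρ : Tendsto (fun N => (Nm (φ N) : ℝ) / N) atTop (𝓝 1) := by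
    have hinv : Tendsto (fun j => (Nm j : ℝ) / Nm (j + 1)) atTop (𝓝 1) := by
      simpa using hratio.inv₀ one_ne_zero
    refine tendsto_of_tendsto_of_tendsto_of_le_of_le' (hinv.comp hφ) tendsto_const_nhds ?_ ?_
    · filter_upwards [hφN, eventually_gt_atTop 0] with N hN hN0
      exact div_le_div_of_nonneg_left (by positivity) (by positivity) (by exact_mod_cast hN.2.le)
    · filter_upwards [hφN, eventually_gt_atTop 0] with N hN hN0
      exact div_le_one_of_le₀ (by exact_mod_cast hN.1) (by positivity)
  have hbN : ∀ᶠ N in atTop,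
      Nm (φ N) / N * l (φ N) ≤ a N ∧ a N ≤ Nm (φ N) / N * u (φ N) := by
    filter_upwards [hφ.eventually hb, hφN, eventually_gt_atTop 0] with N hb hN hN0
    have hN' : (0 : ℝ) < N := Nat.cast_pos.2 hN0
    obtain ⟨h₁, h₂⟩ := hb N hN.1 hN.2.le
    constructor
    · rw [div_mul_eq_mul_div, div_le_iff₀ hN']
      linarith
    · rw [div_mul_eq_mul_div, le_div_iff₀ hN']
      linarith
  simpa using tendsto_of_tendsto_of_tendsto_of_le_of_le' (hρ.mul (hl.comp hφ))
    (hρ.mul (hu.comp hφ)) (hbN.mono fun _ => And.left) (hbN.mono fun _ => And.right)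

theorem exists_contDiff_indicator_le_le_indicator {E : Type*} [NormedAddCommGroup E]
    [NormedSpace ℝ E] [FiniteDimensional ℝ E] {K U : Set E} (hK : IsClosed K) (hU : IsOpen U)
    (hUb : Bornology.IsBounded U) (hKU : K ⊆ U) :
    ∃ g : E → ℝ, ContDiff ℝ (⊤ : ℕ∞) g ∧ HasCompactSupport g ∧ K.indicator 1 ≤ g ∧
      g ≤ U.indicator 1 := by
  obtain ⟨g, hg, hg01, hgU, hgK⟩ :=
    exists_contMDiff_support_eq_eq_one_iff (modelWithCornersSelf ℝ E) (n := ⊤) hU hK hKU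
  refine ⟨g, contMDiff_iff_contDiff.1 hg, ?_, ?_, ?_⟩
  · rw [HasCompactSupport, tsupport, hgU]
    exact hUb.isCompact_closure
  · exact Set.indicator_le' (fun x hx => ((hgK x).1 hx).ge) fun x _ => (hg01 ⟨x, rfl⟩).1
  · exact Set.le_indicator (fun x _ => (hg01 ⟨x, rfl⟩).2)
      fun x hx => (Function.notMem_support.1 (hgU ▸ hx)).le

section Convergence

variable {k : ℕ} {ϑ : ℕ → ℝ} {Nm : ℕ → ℕ}

theorem tendsto_corrSum_of_nonneg (hmono : StrictMono Nm)
    (hratio : Tendsto (fun m => (Nm (m + 1) : ℝ) / Nm m) atTop (𝓝 1))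
    (hsub : ∀ f : (Fin (k - 1) → ℝ) → ℝ, ContDiff ℝ (⊤ : ℕ∞) f → HasCompactSupport f →
      Tendsto (fun m => corrSum k f ϑ (Nm m)) atTop (𝓝 (∫ x, f x)))
    {f : (Fin (k - 1) → ℝ) → ℝ} (hf : ContDiff ℝ (⊤ : ℕ∞) f) (hfc : HasCompactSupport f)
    (hf0 : 0 ≤ f) :
    Tendsto (fun N => corrSum k f ϑ N) atTop (𝓝 (∫ x, f x)) := by
  obtain ⟨R, hR, hfR⟩ := hfc.isBounded.subset_closedBall_lt 0 0
  obtain ⟨L, hL⟩ := hf.lipschitzWith_of_hasCompactSupport hfc (by simp)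
  obtain ⟨χ, hχ, hχc, hRχ, -⟩ := exists_contDiff_indicator_le_le_indicator
    (isClosed_closedBall (x := (0 : Fin (k - 1) → ℝ))) isOpen_ball isBounded_ball
    (closedBall_subset_ball (lt_add_one (2 * R)))
  set ε : ℕ → ℝ := fun j => 2 * L * R * ((Nm (j + 1) : ℝ) / Nm j - 1)
  have hε : Tendsto ε atTop (𝓝 0) := by
    simpa using (hratio.sub_const 1).const_mul (2 * (L : ℝ) * R)
  have hfm := hsub f hf hfc
  have hχm := hsub χ hχ hχc
  have hl : Tendsto (fun j => corrSum k f ϑ (Nm j) - ε j * corrSum k χ ϑ (Nm j)) atTop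
      (𝓝 (∫ x, f x)) := by
    simpa using hfm.sub (hε.mul hχm)
  have hu : Tendsto (fun j => (Nm (j + 1) : ℝ) / Nm j *
      (corrSum k f ϑ (Nm (j + 1)) + ε j * corrSum k χ ϑ (Nm (j + 1)))) atTop (𝓝 (∫ x, f x)) := by
    simpa using hratio.mul ((hfm.comp (tendsto_add_atTop_nat 1)).add
      (hε.mul (hχm.comp (tendsto_add_atTop_nat 1))))
  refine tendsto_of_bracket hmono hratio hl hu ?_
  filter_upwards [hratio.eventually (ge_mem_nhds one_lt_two), eventually_gt_atTop 0]
    with j hj2 hj0 N h₁ h₂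
  have hpos : 0 < Nm j := hj0.trans_le (hmono.id_le j)
  rw [div_le_iff₀ (by positivity)] at hj2
  exact corrSum_bracket hL hR.le hfR hf0 hRχ hχc hpos h₁ h₂ (by exact_mod_cast hj2)

theorem tendsto_corrSum_of_contDiff (hmono : StrictMono Nm)
    (hratio : Tendsto (fun m => (Nm (m + 1) : ℝ) / Nm m) atTop (𝓝 1))
    (hsub : ∀ f : (Fin (k - 1) → ℝ) → ℝ, ContDiff ℝ (⊤ : ℕ∞) f → HasCompactSupport f →
      Tendsto (fun m => corrSum k f ϑ (Nm m)) atTop (𝓝 (∫ x, f x)))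
    {f : (Fin (k - 1) → ℝ) → ℝ} (hf : ContDiff ℝ (⊤ : ℕ∞) f) (hfc : HasCompactSupport f) :
    Tendsto (fun N => corrSum k f ϑ N) atTop (𝓝 (∫ x, f x)) := by
  obtain ⟨R, hfR⟩ := hfc.isBounded.subset_closedBall 0
  obtain ⟨C, hC⟩ := hf.continuous.bounded_above_of_compact_support hfc
  obtain ⟨χ, hχ, hχc, hRχ, -⟩ := exists_contDiff_indicator_le_le_indicator
    (isClosed_closedBall (x := (0 : Fin (k - 1) → ℝ))) isOpen_ball isBounded_ball
    (closedBall_subset_ball (lt_add_one R))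
  have hC0 : 0 ≤ C := (norm_nonneg _).trans (hC 0)
  have hCχ : ContDiff ℝ (⊤ : ℕ∞) (C • χ) := hχ.const_smul C
  have hCχc : HasCompactSupport (C • χ) := hχc.mono (Function.support_const_smul_subset _ _)
  have hCχ0 : 0 ≤ C • χ := fun z =>
    smul_nonneg hC0 ((Set.indicator_nonneg (fun _ _ => zero_le_one) z).trans (hRχ z))
  have hfCχ0 : 0 ≤ f + C • χ := fun z => by
    by_cases hz : z ∈ closedBall 0 R
    · have h1 : 1 ≤ χ z := by simpa [Set.indicator_of_mem hz] using hRχ z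
      have h2 := abs_le.1 (Real.norm_eq_abs (f z) ▸ hC z)
      simp only [Pi.zero_apply, Pi.add_apply, Pi.smul_apply, smul_eq_mul]
      nlinarith [h2.1]
    · rw [Pi.add_apply, image_eq_zero_of_notMem_tsupport (mt (hfR ·) hz), zero_add]
      exact hCχ0 z
  have hlim := (tendsto_corrSum_of_nonneg (f := f + C • χ) hmono hratio hsub (hf.add hCχ)
    (hfc.add hCχc) hfCχ0).sub (tendsto_corrSum_of_nonneg hmono hratio hsub hCχ hCχc hCχ0)
  rw [integral_add' (hf.continuous.integrable_of_hasCompactSupport hfc)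
    (hCχ.continuous.integrable_of_hasCompactSupport hCχc), add_sub_cancel_right] at hlim
  exact hlim.congr fun N => by rw [corrSum_add hfc hCχc, add_sub_cancel_right]

theorem tendsto_corrSum_indicator
    (hsmooth : ∀ f : (Fin (k - 1) → ℝ) → ℝ, ContDiff ℝ (⊤ : ℕ∞) f → HasCompactSupport f →
      Tendsto (fun N => corrSum k f ϑ N) atTop (𝓝 (∫ x, f x)))
    {K U : Set (Fin (k - 1) → ℝ)} (hK : IsCompact K) (hU : IsOpen U) (hUK : U ⊆ K)
    (hμ : volume K ≤ volume U) :
    Tendsto (fun N => corrSum k (K.indicator 1) ϑ N) atTop (𝓝 (∫ x, K.indicator 1 x)) := by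
  have hKc : HasCompactSupport (K.indicator (1 : (Fin (k - 1) → ℝ) → ℝ)) :=
    .intro hK fun _ hx => Set.indicator_of_notMem hx _
  have hK0 : 0 ≤ K.indicator (1 : (Fin (k - 1) → ℝ) → ℝ) :=
    Set.indicator_nonneg fun _ _ => zero_le_one
  rw [integral_indicator_one hK.measurableSet]
  refine tendsto_order.2 ⟨fun c hc => ?_, fun c hc => ?_⟩
  · rcases lt_or_ge c 0 with hc0 | hc0
    · exact Eventually.of_forall fun N => hc0.trans_le (corrSum_nonneg hK0 N)
    have hUfin : volume U ≠ ⊤ := ((measure_mono hUK).trans_lt hK.measure_lt_top).ne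
    obtain ⟨K', hK'U, hK', hcK'⟩ := hU.exists_lt_isCompact
      ((ENNReal.ofReal_lt_iff_lt_toReal hc0 hUfin).2 (hc.trans_le (ENNReal.toReal_mono hUfin hμ)))
    obtain ⟨g, hg, hgc, hK'g, hgU⟩ := exists_contDiff_indicator_le_le_indicator hK'.isClosed hU
      (hK.isBounded.subset hUK) hK'U
    have hcg : c < ∫ x, g x := calc
      c < volume.real K' := (ENNReal.ofReal_lt_iff_lt_toReal hc0 hK'.measure_lt_top.ne).1 hcK'
      _ = ∫ x, K'.indicator 1 x := (integral_indicator_one hK'.measurableSet).symm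
      _ ≤ ∫ x, g x := integral_mono_of_nonneg
          (ae_of_all _ (Set.indicator_nonneg fun _ _ => zero_le_one))
          (hg.continuous.integrable_of_hasCompactSupport hgc) (ae_of_all _ hK'g)
    filter_upwards [(hsmooth g hg hgc).eventually (lt_mem_nhds hcg)] with N hN
    exact hN.trans_le (corrSum_mono hgc hKc hK0
      (hgU.trans (Set.indicator_le_indicator_of_subset hUK fun _ => zero_le_one)) N)
  · obtain ⟨V, hKV, hV, hVc⟩ := K.exists_isOpen_lt_of_lt _
      ((ENNReal.lt_ofReal_iff_toReal_lt hK.measure_lt_top.ne).2 hc)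
    -- `V` need not be bounded, and the bump below must have compact support
    have hW : IsOpen (V ∩ thickening 1 K) := hV.inter isOpen_thickening
    have hWc : volume (V ∩ thickening 1 K) < ENNReal.ofReal c :=
      (measure_mono Set.inter_subset_left).trans_lt hVc
    obtain ⟨g, hg, hgc, hKg, hgW⟩ := exists_contDiff_indicator_le_le_indicator hK.isClosed hW
      (hK.isBounded.thickening.subset Set.inter_subset_right)
      (Set.subset_inter hKV (self_subset_thickening one_pos K))
    have hgc' : ∫ x, g x < c := calc
      ∫ x, g x ≤ ∫ x, (V ∩ thickening 1 K).indicator 1 x := integral_mono_of_nonneg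
          (ae_of_all _ (hK0.trans hKg))
          ((integrable_indicator_iff hW.measurableSet).2
            (integrableOn_const (hWc.trans ENNReal.ofReal_lt_top).ne))
          (ae_of_all _ hgW)
      _ = volume.real (V ∩ thickening 1 K) := integral_indicator_one hW.measurableSet
      _ < c := ENNReal.toReal_lt_of_lt_ofReal hWc
    filter_upwards [(hsmooth g hg hgc).eventually (gt_mem_nhds hgc')] with N hN
    exact (corrSum_mono hKc hgc (hK0.trans hKg) hKg N).trans_lt hN

end Convergence

theorem subsequence_to_full_convergence_general (k : ℕ) (ϑ : ℕ → ℝ)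
    (Nm : ℕ → ℕ) (hmono : StrictMono Nm)
    (hratio : Tendsto (fun m => (Nm (m + 1) : ℝ) / Nm m) atTop (nhds 1))
    (hsub : ∀ f : (Fin (k - 1) → ℝ) → ℝ, ContDiff ℝ (⊤ : ℕ∞) f → HasCompactSupport f →
      Tendsto (fun m => corrSum k f ϑ (Nm m)) atTop (nhds (∫ x, f x))) :
    (∀ f : (Fin (k - 1) → ℝ) → ℝ, ContDiff ℝ (⊤ : ℕ∞) f → HasCompactSupport f →
      Tendsto (fun N => corrSum k f ϑ N) atTop (nhds (∫ x, f x))) ∧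
      ∀ a b : Fin (k - 1) → ℝ,
        Tendsto (fun N => corrSum k ((Set.Icc a b).indicator fun _ => (1 : ℝ)) ϑ N) atTop
          (nhds (∫ x, (Set.Icc a b).indicator (fun _ => (1 : ℝ)) x)) := by
  have hsmooth : ∀ f : (Fin (k - 1) → ℝ) → ℝ, ContDiff ℝ (⊤ : ℕ∞) f → HasCompactSupport f →
      Tendsto (fun N => corrSum k f ϑ N) atTop (nhds (∫ x, f x)) :=
    fun _ hf hfc => tendsto_corrSum_of_contDiff hmono hratio hsub hf hfc
  refine ⟨hsmooth, fun a b => tendsto_corrSum_indicator hsmooth isCompact_Icc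
    (isOpen_set_pi Set.finite_univ fun i _ => isOpen_Ioo (a := a i) (b := b i))
    (fun z hz => ⟨fun i => (hz i trivial).1.le, fun i => (hz i trivial).2.le⟩) ?_⟩
  rw [Real.volume_Icc_pi, Real.volume_pi_Ioo]

theorem subsequence_to_full_convergence (k : ℕ) (hk : 2 ≤ k) (ϑ : ℕ → ℝ)
    (Nm : ℕ → ℕ) (hmono : StrictMono Nm) (hpos : ∀ m, 0 < Nm m)
    (hratio : Tendsto (fun m => (Nm (m + 1) : ℝ) / Nm m) atTop (nhds 1))
    (hsub : ∀ f : (Fin (k - 1) → ℝ) → ℝ, ContDiff ℝ (⊤ : ℕ∞) f → HasCompactSupport f →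
      Tendsto (fun m => corrSum k f ϑ (Nm m)) atTop (nhds (∫ x, f x))) :
    (∀ f : (Fin (k - 1) → ℝ) → ℝ, ContDiff ℝ (⊤ : ℕ∞) f → HasCompactSupport f →
      Tendsto (fun N => corrSum k f ϑ N) atTop (nhds (∫ x, f x))) ∧
      ∀ a b : Fin (k - 1) → ℝ,
        Tendsto (fun N => corrSum k ((Set.Icc a b).indicator fun _ => (1 : ℝ)) ϑ N) atTop
          (nhds (∫ x, (Set.Icc a b).indicator (fun _ => (1 : ℝ)) x)) :=
  subsequence_to_full_convergence_general k ϑ Nm hmono hratio hsub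
end
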